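/- arXiv:2404.16420 — 2 statements merged into one kernel-verified Lean document; each statement's English description precedes it below -/
import Mathlib

section
/- In the standing setup with dim U > 1, the polynomial functions p₀, p₁, p₂, p'₀, p'₁, p'₂ are all nonzero. As a consequence, neither p₀ nor p'₀ is a function of just one of the two arguments: each has positive degree in both the first and the second argument; in particular the total degrees of p₀ and p'₀ are strictly greater than 1. -/
open TensorProduct LinearMap

noncomputable section

variable (k V : Type) [Field k] [AddCommGroup V] [Module k V]

/-- `R ⊗ Id` acting on `V ⊗ (V ⊗ V)`. -/
def op12 (R : V ⊗[k] V →ₗ[k] V ⊗[k] V) :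
    V ⊗[k] (V ⊗[k] V) →ₗ[k] V ⊗[k] (V ⊗[k] V) :=
  (TensorProduct.assoc k V V V).toLinearMap ∘ₗ LinearMap.rTensor V R ∘ₗ
    (TensorProduct.assoc k V V V).symm.toLinearMap

/-- `Id ⊗ R` acting on `V ⊗ (V ⊗ V)`. -/
def op23 (R : V ⊗[k] V →ₗ[k] V ⊗[k] V) :
    V ⊗[k] (V ⊗[k] V) →ₗ[k] V ⊗[k] (V ⊗[k] V) :=
  LinearMap.lTensor V R

/-- A Hecke symmetry with parameter `q`: an operator on `V ⊗ V` satisfying the braid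
equation and the Hecke relation `(R - q·Id)(R + Id) = 0`, with `q ≠ 0`. -/
def IsHeckeSymmetry (q : k) (R : V ⊗[k] V →ₗ[k] V ⊗[k] V) : Prop :=
  q ≠ 0 ∧
    op12 k V R ∘ₗ op23 k V R ∘ₗ op12 k V R = op23 k V R ∘ₗ op12 k V R ∘ₗ op23 k V R ∧
    (R - q • LinearMap.id) ∘ₗ (R + LinearMap.id) = 0

/-- `x ⋏ y = ζ(x) ⊗ y - ζ(y) ⊗ x`. -/
def wedge2 (ζ : V ≃ₗ[k] V) (x y : V) : V ⊗[k] V := ζ x ⊗ₜ[k] y - ζ y ⊗ₜ[k] x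

/-- `Υ²`, the span of the tensors `x ⋏ y`. -/
def Ups2 (ζ : V ≃ₗ[k] V) : Submodule k (V ⊗[k] V) :=
  Submodule.span k {w : V ⊗[k] V | ∃ x y : V, w = wedge2 k V ζ x y}

/-- `x ⋏ y ⋏ z`. -/
def wedge3 (ζ : V ≃ₗ[k] V) (x y z : V) : V ⊗[k] (V ⊗[k] V) :=
  ζ (ζ x) ⊗ₜ[k] (ζ y ⊗ₜ[k] z) + ζ (ζ y) ⊗ₜ[k] (ζ z ⊗ₜ[k] x) + ζ (ζ z) ⊗ₜ[k] (ζ x ⊗ₜ[k] y)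
    - ζ (ζ x) ⊗ₜ[k] (ζ z ⊗ₜ[k] y) - ζ (ζ y) ⊗ₜ[k] (ζ x ⊗ₜ[k] z) - ζ (ζ z) ⊗ₜ[k] (ζ y ⊗ₜ[k] x)

/-- `Υ³`, the span of the tensors `x ⋏ y ⋏ z` (which coincides with
`(V ⊗ Υ²) ∩ (Υ² ⊗ V)`). -/
def Ups3 (ζ : V ≃ₗ[k] V) : Submodule k (V ⊗[k] (V ⊗[k] V)) :=
  Submodule.span k {t : V ⊗[k] (V ⊗[k] V) | ∃ x y z : V, t = wedge3 k V ζ x y z}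

/-- The bilinear extension `w ↦ x ⋏ w` of the wedge multiplication `V × Υ² → Υ³`:
on elements of `Υ²` it satisfies `x ⋏ (y ⋏ z) = x ⋏ y ⋏ z`. -/
def wedge31 (ζ : V ≃ₗ[k] V) (x : V) : V ⊗[k] V →ₗ[k] V ⊗[k] (V ⊗[k] V) :=
  TensorProduct.mk k V (V ⊗[k] V) (ζ (ζ x)) +
    (TensorProduct.assoc k V V V).toLinearMap ∘ₗ
      ((TensorProduct.mk k (V ⊗[k] V) V).flip x ∘ₗ
        TensorProduct.map ζ.toLinearMap ζ.toLinearMap) -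
    TensorProduct.map ζ.toLinearMap (TensorProduct.mk k V V (ζ x))

/-- The skewsymmetrizer `Y = q·Id - R`. -/
def skewY (q : k) (R : V ⊗[k] V →ₗ[k] V ⊗[k] V) : V ⊗[k] V →ₗ[k] V ⊗[k] V :=
  q • LinearMap.id - R

/-- `R' = (ζ⁻¹ ⊗ ζ⁻¹) ∘ R ∘ (ζ ⊗ ζ)`. -/
def Rprime (ζ : V ≃ₗ[k] V) (R : V ⊗[k] V →ₗ[k] V ⊗[k] V) :
    V ⊗[k] V →ₗ[k] V ⊗[k] V :=
  TensorProduct.map ζ.symm.toLinearMap ζ.symm.toLinearMap ∘ₗ R ∘ₗ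
    TensorProduct.map ζ.toLinearMap ζ.toLinearMap

/-- `ℓ_{xy}(z) = ω̃(x ⋏ Y(ζ(y) ⊗ z))`, where `Ω` is a linear extension of `ω̃` to
`V ⊗ V ⊗ V`. -/
def ell (ζ : V ≃ₗ[k] V) (Y : V ⊗[k] V →ₗ[k] V ⊗[k] V)
    (Ω : V ⊗[k] (V ⊗[k] V) →ₗ[k] k) (x y : V) : Module.Dual k V :=
  Ω ∘ₗ wedge31 k V ζ x ∘ₗ Y ∘ₗ TensorProduct.mk k V V (ζ y)

/-- The linear forms `ℓ_{xy}` associated with the Hecke symmetry `R`. -/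
def ellF (ζ : V ≃ₗ[k] V) (q : k) (R : V ⊗[k] V →ₗ[k] V ⊗[k] V)
    (Ω : V ⊗[k] (V ⊗[k] V) →ₗ[k] k) (x y : V) : Module.Dual k V :=
  ell k V ζ (skewY k V q R) Ω x y

/-- The linear forms `ℓ'_{xy}` associated with the twisted Hecke symmetry `R'`. -/
def ellF' (ζ : V ≃ₗ[k] V) (q : k) (R : V ⊗[k] V →ₗ[k] V ⊗[k] V)
    (Ω : V ⊗[k] (V ⊗[k] V) →ₗ[k] k) (x y : V) : Module.Dual k V :=
  ell k V ζ (skewY k V q (Rprime k V ζ R)) Ω x y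

/-- Polynomial functions on `V` (in the coordinates determined by a basis of `V*`). -/
abbrev PolyV (k : Type) [Field k] := MvPolynomial (Fin 3) k

/-- Polynomial functions on `V × V`. -/
abbrev PolyVV (k : Type) [Field k] := MvPolynomial ((Fin 3) ⊕ (Fin 3)) k

/-- The weight used for bihomogeneity: variables of the first group have weight `(1,0)`
and variables of the second group have weight `(0,1)`; a polynomial is bihomogeneous of
bidegree `(m,n)` iff it is weighted homogeneous of weight `(m,n)`. -/
def bideg : (Fin 3) ⊕ (Fin 3) → ℕ × ℕ := Sum.elim (fun _ => (1, 0)) (fun _ => (0, 1))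

/-- Coordinates of `x ∈ V` with respect to (the basis of `V` predual to) a basis `B`
of `V*`: the `i`-th coordinate function is `B i`. -/
def coords (B : Module.Basis (Fin 3) k (Module.Dual k V)) (x : V) : Fin 3 → k :=
  fun i => B i x

/-- Value at `x ∈ V` of a polynomial function on `V`. -/
def qEval (B : Module.Basis (Fin 3) k (Module.Dual k V)) (p : PolyV k) (x : V) : k :=
  MvPolynomial.eval (coords k V B x) p

/-- Value at `(x,y) ∈ V × V` of a polynomial function on `V × V`. -/
def pEval (B : Module.Basis (Fin 3) k (Module.Dual k V)) (p : PolyVV k) (x y : V) : k :=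
  MvPolynomial.eval (Sum.elim (coords k V B x) (coords k V B y)) p

/-- The polynomial functions `Δ₁, Δ₂, Δ₃` on `V × V`:  the `2×2`-minors of the matrix
with rows `(a₁(x), a₂(x), a₃(x))` and `(a'₁(y), a'₂(y), a'₃(y))`. -/
def Delta (a a' : Fin 3 → PolyV k) : Fin 3 → PolyVV k :=
  ![MvPolynomial.rename Sum.inl (a 1) * MvPolynomial.rename Sum.inr (a' 2)
      - MvPolynomial.rename Sum.inl (a 2) * MvPolynomial.rename Sum.inr (a' 1),
    MvPolynomial.rename Sum.inl (a 0) * MvPolynomial.rename Sum.inr (a' 2)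
      - MvPolynomial.rename Sum.inl (a 2) * MvPolynomial.rename Sum.inr (a' 0),
    MvPolynomial.rename Sum.inl (a 0) * MvPolynomial.rename Sum.inr (a' 1)
      - MvPolynomial.rename Sum.inl (a 1) * MvPolynomial.rename Sum.inr (a' 0)]


namespace Aux13

open MvPolynomial

/-- componentwise description of the bideg weight of a monomial -/
lemma weight_bideg_eq (d : (Fin 3 ⊕ Fin 3) →₀ ℕ) :
    Finsupp.weight bideg d = (∑ a : Fin 3, d (Sum.inl a), ∑ b : Fin 3, d (Sum.inr b)) := by
  rw [Finsupp.weight_apply, Finsupp.sum_fintype _ _ (fun i => by simp)]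
  rw [Fintype.sum_sum_type]
  have h1 : ∀ a : Fin 3, d (Sum.inl a) • bideg (Sum.inl a) = (d (Sum.inl a), 0) := by
    intro a; simp [bideg, Prod.smul_def]
  have h2 : ∀ b : Fin 3, d (Sum.inr b) • bideg (Sum.inr b) = (0, d (Sum.inr b)) := by
    intro b; simp [bideg, Prod.smul_def]
  simp only [h1, h2, Prod.ext_iff]
  constructor
  · rw [Prod.fst_add, Prod.fst_sum, Prod.fst_sum]
    simp
  · rw [Prod.snd_add, Prod.snd_sum, Prod.snd_sum]
    simp

/-- if the first weight is zero, no `inl` variable occurs in the support -/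
lemma support_inr_only {k : Type} [Field k] {p : PolyVV k} {n : ℕ}
    (hp : p.IsWeightedHomogeneous bideg (0, n)) {d : (Fin 3 ⊕ Fin 3) →₀ ℕ}
    (hd : d ∈ p.support) (a : Fin 3) : d (Sum.inl a) = 0 := by
  have h := hp (MvPolynomial.mem_support_iff.mp hd)
  rw [weight_bideg_eq] at h
  have h1 : (∑ a : Fin 3, d (Sum.inl a)) = 0 := by
    have := congrArg Prod.fst h; simpa using this
  exact (Finset.sum_eq_zero_iff.mp h1) a (Finset.mem_univ a)

lemma support_inl_only {k : Type} [Field k] {p : PolyVV k} {m : ℕ}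
    (hp : p.IsWeightedHomogeneous bideg (m, 0)) {d : (Fin 3 ⊕ Fin 3) →₀ ℕ}
    (hd : d ∈ p.support) (b : Fin 3) : d (Sum.inr b) = 0 := by
  have h := hp (MvPolynomial.mem_support_iff.mp hd)
  rw [weight_bideg_eq] at h
  have h1 : (∑ b : Fin 3, d (Sum.inr b)) = 0 := by
    have := congrArg Prod.snd h; simpa using this
  exact (Finset.sum_eq_zero_iff.mp h1) b (Finset.mem_univ b)

/-- eval of a polynomial of bidegree `(0,n)` only depends on the `inr` coordinates -/
lemma eval_eq_of_agree_inr {k : Type} [Field k] {p : PolyVV k} {n : ℕ}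
    (hp : p.IsWeightedHomogeneous bideg (0, n)) (v v' : (Fin 3 ⊕ Fin 3) → k)
    (h : ∀ b, v (Sum.inr b) = v' (Sum.inr b)) :
    MvPolynomial.eval v p = MvPolynomial.eval v' p := by
  rw [MvPolynomial.eval_eq, MvPolynomial.eval_eq]
  apply Finset.sum_congr rfl
  intro d hd
  congr 1
  apply Finset.prod_congr rfl
  intro i hi
  rcases i with a | b
  · exact absurd (support_inr_only hp hd a) (Finsupp.mem_support_iff.mp hi)
  · rw [h b]

lemma eval_eq_of_agree_inl {k : Type} [Field k] {p : PolyVV k} {m : ℕ}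
    (hp : p.IsWeightedHomogeneous bideg (m, 0)) (v v' : (Fin 3 ⊕ Fin 3) → k)
    (h : ∀ a, v (Sum.inl a) = v' (Sum.inl a)) :
    MvPolynomial.eval v p = MvPolynomial.eval v' p := by
  rw [MvPolynomial.eval_eq, MvPolynomial.eval_eq]
  apply Finset.sum_congr rfl
  intro d hd
  congr 1
  apply Finset.prod_congr rfl
  intro i hi
  rcases i with a | b
  · rw [h a]
  · exact absurd (support_inl_only hp hd b) (Finsupp.mem_support_iff.mp hi)

end Aux13

namespace Aux13

open MvPolynomial

variable {k : Type} [Field k]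

/-- unique weight of a nonzero weighted-homogeneous polynomial -/
lemma weight_unique {p : PolyVV k} {w w' : ℕ × ℕ} (hp : p ≠ 0)
    (h : p.IsWeightedHomogeneous bideg w) (h' : p.IsWeightedHomogeneous bideg w') : w = w' :=
  h.inj_right hp h'

/-- a factor of a weighted homogeneous polynomial is weighted homogeneous -/
lemma factor_WH {p s : PolyVV k} {wp wr : ℕ × ℕ}
    (hp : p.IsWeightedHomogeneous bideg wp)
    (hps : (p * s).IsWeightedHomogeneous bideg wr)
    (hp0 : p ≠ 0) (hs0 : s ≠ 0) :
    ∃ ws : ℕ × ℕ, s.IsWeightedHomogeneous bideg ws ∧ wp + ws = wr := by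
  classical
  -- all nonzero weighted components of s have the same weight, determined by wr
  have hcomp : ∀ c : ℕ × ℕ, wp + c ≠ wr →
      weightedHomogeneousComponent bideg c s = 0 := by
    intro c hc
    by_contra hne
    -- p * component is WH of weight wp + c
    have h1 : (p * weightedHomogeneousComponent bideg c s).IsWeightedHomogeneous bideg (wp + c) :=
      hp.mul (weightedHomogeneousComponent_isWeightedHomogeneous c s)
    have hpc0 : p * weightedHomogeneousComponent bideg c s ≠ 0 :=
      mul_ne_zero hp0 hne
    -- expand p * s as sum of p * components
    have hfin := weightedHomogeneousComponent_finsupp (w := bideg) s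
    have hsum : (finsum fun m => weightedHomogeneousComponent bideg m s) = s :=
      sum_weightedHomogeneousComponent bideg s
    -- apply the (wp+c) component to both sides of p*s
    have key : weightedHomogeneousComponent bideg (wp + c) (p * s) =
        p * weightedHomogeneousComponent bideg c s := by
      conv_lhs => rw [← hsum]
      rw [finsum_eq_sum _ hfin]
      rw [Finset.mul_sum, map_sum]
      rw [Finset.sum_eq_single_of_mem c]
      · exact (hp.mul (weightedHomogeneousComponent_isWeightedHomogeneous c
          s)).weightedHomogeneousComponent_same
      · refine (Set.Finite.mem_toFinset (hs := hfin)).mpr ?_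
        exact hne
      · intro c' _ hc'
        apply (hp.mul (weightedHomogeneousComponent_isWeightedHomogeneous c'
          s)).weightedHomogeneousComponent_ne
        intro hEq
        exact hc' (add_left_cancel hEq).symm
      -- done
    have hz : weightedHomogeneousComponent bideg (wp + c) (p * s) = 0 :=
      hps.weightedHomogeneousComponent_ne _ hc
    rw [key] at hz
    exact hpc0 hz
  -- s is a sum of its components; all nonzero ones share weight c₀ with wp + c₀ = wr
  by_cases hex : ∃ c : ℕ × ℕ, wp + c = wr
  · obtain ⟨c₀, hc₀⟩ := hex
    refine ⟨c₀, ?_, hc₀⟩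
    have hsum : (finsum fun m => weightedHomogeneousComponent bideg m s) = s :=
      sum_weightedHomogeneousComponent bideg s
    have hfin := weightedHomogeneousComponent_finsupp (w := bideg) s
    have : s = weightedHomogeneousComponent bideg c₀ s := by
      conv_lhs => rw [← hsum]
      rw [finsum_eq_sum _ hfin]
      by_cases hmem : c₀ ∈ hfin.toFinset
      · rw [Finset.sum_eq_single_of_mem c₀ hmem]
        intro c' _ hne
        apply hcomp
        rw [← hc₀]
        exact fun h => hne (add_left_cancel h)
      · rw [Finset.sum_eq_zero]
        · have hmem := (not_congr (Set.Finite.mem_toFinset (hs := hfin))).mp hmem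
          rw [Function.mem_support, not_not] at hmem
          exact hmem.symm
        · intro c' hc'
          by_cases h : c' = c₀
          · subst h
            replace hc' := (Set.Finite.mem_toFinset (hs := hfin)).mp hc'
            exact absurd hc' (by
              have hmem := (not_congr (Set.Finite.mem_toFinset (hs := hfin))).mp hmem
              rw [Function.mem_support, not_not] at hmem
              simp [Function.mem_support, hmem])
          · exact hcomp c' (fun hEq => h (add_left_cancel (hc₀ ▸ hEq)))
    rw [this]
    exact weightedHomogeneousComponent_isWeightedHomogeneous c₀ s
  · exfalso
    apply hs0
    have hsum : (finsum fun m => weightedHomogeneousComponent bideg m s) = s :=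
      sum_weightedHomogeneousComponent bideg s
    have hfin := weightedHomogeneousComponent_finsupp (w := bideg) s
    rw [← hsum, finsum_eq_sum _ hfin]
    apply Finset.sum_eq_zero
    intro c _
    exact hcomp c (fun h => hex ⟨c, h⟩)

/-- a variable is not a unit -/
lemma not_isUnit_X : ¬ IsUnit (X (Sum.inl 0) : PolyVV k) := by
  intro h
  obtain ⟨g, hg⟩ := h.exists_right_inv
  have := congrArg (MvPolynomial.eval (fun _ => (0 : k))) hg
  simp at this

lemma totalDegree_of_WH {p : PolyVV k} {m n : ℕ} (hp : p ≠ 0)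
    (h : p.IsWeightedHomogeneous bideg (m, n)) : p.totalDegree = m + n := by
  apply le_antisymm
  · apply Finset.sup_le
    intro d hd
    have hw := h (MvPolynomial.mem_support_iff.mp hd)
    rw [weight_bideg_eq] at hw
    have h1 : (∑ a : Fin 3, d (Sum.inl a)) = m := congrArg Prod.fst hw
    have h2 : (∑ b : Fin 3, d (Sum.inr b)) = n := congrArg Prod.snd hw
    have : (d.sum fun _ e => e) = m + n := by
      rw [Finsupp.sum_fintype _ _ (fun i => rfl), Fintype.sum_sum_type, h1, h2]
    omega
  · obtain ⟨d, hd⟩ : ∃ d, coeff d p ≠ 0 := by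
      by_contra hall
      push_neg at hall
      exact hp (MvPolynomial.ext _ _ (by simpa using hall))
    have hw := h hd
    rw [weight_bideg_eq] at hw
    have h1 : (∑ a : Fin 3, d (Sum.inl a)) = m := congrArg Prod.fst hw
    have h2 : (∑ b : Fin 3, d (Sum.inr b)) = n := congrArg Prod.snd hw
    have hsum : (d.sum fun _ e => e) = m + n := by
      rw [Finsupp.sum_fintype _ _ (fun i => rfl), Fintype.sum_sum_type, h1, h2]
    calc m + n = d.sum fun _ e => e := hsum.symm
      _ ≤ p.totalDegree := le_totalDegree (MvPolynomial.mem_support_iff.mpr hd)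

end Aux13

namespace Aux13

open Module

variable {k V : Type} [Field k] [AddCommGroup V] [Module k V]

lemma finrank_span_le_one {S : Set (Module.Dual k V)} {φ₀ : Module.Dual k V}
    (h : ∀ f ∈ S, ∃ c : k, f = c • φ₀) :
    Module.finrank k (Submodule.span k S) ≤ 1 := by
  have hle : Submodule.span k S ≤ Submodule.span k {φ₀} := by
    rw [Submodule.span_le]
    intro f hf
    obtain ⟨c, rfl⟩ := h f hf
    exact Submodule.smul_mem _ _ (Submodule.subset_span rfl)
  by_cases hφ : φ₀ = 0
  · subst hφ
    rw [show Submodule.span k ({0} : Set (Module.Dual k V)) = ⊥ by simp] at hle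
    rw [le_bot_iff] at hle
    rw [hle]
    simp
  · have h1 : Module.finrank k (Submodule.span k ({φ₀} : Set (Module.Dual k V))) = 1 :=
      finrank_span_singleton hφ
    calc Module.finrank k (Submodule.span k S)
        ≤ Module.finrank k (Submodule.span k ({φ₀} : Set (Module.Dual k V))) :=
          Submodule.finrank_mono hle
      _ = 1 := h1

omit [AddCommGroup V] in
lemma vec3_eta (v : Fin 3 → V) : ![v 0, v 1, v 2] = v := by
  funext i
  fin_cases i <;> rfl

lemma omega_swap01 (ω : AlternatingMap k V k (Fin 3)) (x y z : V) :
    ω ![y, x, z] = - ω ![x, y, z] := by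
  have h := ω.map_swap (v := ![x, y, z]) (i := (0 : Fin 3)) (j := 1) (by decide)
  have hv : (![x, y, z] ∘ Equiv.swap (0 : Fin 3) 1) = ![y, x, z] := by
    funext i
    fin_cases i <;> simp [Equiv.swap_apply_def]
  rwa [hv] at h

lemma omega_eq01 (ω : AlternatingMap k V k (Fin 3)) (x z : V) :
    ω ![x, x, z] = 0 :=
  ω.map_eq_zero_of_eq _ (i := (0:Fin 3)) (j := 1) rfl (by decide)

lemma exists_omega_ne_zero {ω : AlternatingMap k V k (Fin 3)} (hω : ω ≠ 0) :
    ∃ t : Fin 3 → V, ω ![t 0, t 1, t 2] ≠ 0 := by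
  by_contra hall
  push_neg at hall
  apply hω
  ext v
  rw [← vec3_eta v]
  simp [hall v]

/-- The "shape B" degeneration `ℓ x y = π y • α x` forces the diagonal to lie on a line. -/
lemma shapeB {q : k} {ω : AlternatingMap k V k (Fin 3)} (h2 : (2:k) ≠ 0)
    (ℓℓ : V → V → Module.Dual k V)
    (hK : ∀ x y z : V, ℓℓ x y z - ℓℓ x z y = (q + 1) * ω ![x, y, z])
    (π : V → k) (α : V → Module.Dual k V)
    (hstruct : ∀ x y, ℓℓ x y = π y • α x) :
    ∃ φ₀ : Module.Dual k V, ∀ x, ∃ c : k, ℓℓ x x = c • φ₀ := by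
  by_cases hq : q + 1 = 0
  · -- symmetric case
    have hid : ∀ x y z : V, π y * α x z = π z * α x y := by
      intro x y z
      have := hK x y z
      rw [hq, zero_mul, sub_eq_zero, hstruct, hstruct] at this
      simpa using this
    by_cases hπ : ∀ y, π y = 0
    · refine ⟨0, fun x => ⟨0, ?_⟩⟩
      rw [hstruct, hπ x, zero_smul, zero_smul]
    · push_neg at hπ
      obtain ⟨y₀, hy₀⟩ := hπ
      have hα : ∀ x z, α x z = π z * α x y₀ / π y₀ := by
        intro x z
        field_simp
        rw [mul_comm (α x z) (π y₀), hid x y₀ z]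
      set c : V → k := fun x => π x * α x y₀ / π y₀ with hc
      have hdiag : ∀ x z, ℓℓ x x z = c x * π z := by
        intro x z
        rw [hstruct]
        simp only [LinearMap.smul_apply, smul_eq_mul]
        rw [hα x z, hc]
        field_simp
      by_cases hc0 : ∀ x, c x = 0
      · refine ⟨0, fun x => ⟨0, ?_⟩⟩
        ext z
        simp [hdiag x z, hc0 x]
      · push_neg at hc0
        obtain ⟨x₁, hx₁⟩ := hc0
        refine ⟨ℓℓ x₁ x₁, fun x => ⟨c x / c x₁, ?_⟩⟩
        ext z
        simp only [LinearMap.smul_apply, smul_eq_mul, hdiag]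
        field_simp
  · -- antisymmetrize
    have hsym : ∀ x z : V, π x * α x z = π z * α x x := by
      intro x z
      have hxy : ∀ x y z : V, (ℓℓ x y z - ℓℓ x z y) + (ℓℓ y x z - ℓℓ y z x) = 0 := by
        intro x y z
        rw [hK, hK, omega_swap01]
        ring
      have h4 := hxy x x z
      simp only [hstruct, LinearMap.smul_apply, smul_eq_mul] at h4
      have h3 : 2 * (π x * α x z - π z * α x x) = 0 := by linear_combination h4
      rcases mul_eq_zero.mp h3 with h | h
      · exact absurd h h2
      · linear_combination h
    have hdiag : ∀ x z, ℓℓ x x z = π z * α x x := by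
      intro x z
      rw [hstruct]
      simp only [LinearMap.smul_apply, smul_eq_mul]
      exact hsym x z
    by_cases hc0 : ∀ x, α x x = 0
    · refine ⟨0, fun x => ⟨0, ?_⟩⟩
      ext z
      simp [hdiag x z, hc0 x]
    · push_neg at hc0
      obtain ⟨x₁, hx₁⟩ := hc0
      refine ⟨ℓℓ x₁ x₁, fun x => ⟨α x x / α x₁ x₁, ?_⟩⟩
      ext z
      simp only [LinearMap.smul_apply, smul_eq_mul, hdiag]
      field_simp

end Aux13

namespace Aux13

open TensorProduct LinearMap

variable {k V : Type} [Field k] [AddCommGroup V] [Module k V]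

lemma skewY_apply (q : k) (R : V ⊗[k] V →ₗ[k] V ⊗[k] V) (w : V ⊗[k] V) :
    skewY k V q R w = q • w - R w := rfl

lemma ell_apply (ζ : V ≃ₗ[k] V) (Y : V ⊗[k] V →ₗ[k] V ⊗[k] V)
    (Ω : V ⊗[k] (V ⊗[k] V) →ₗ[k] k) (x y z : V) :
    ell k V ζ Y Ω x y z = Ω (wedge31 k V ζ x (Y (ζ y ⊗ₜ[k] z))) := rfl

lemma wedge31_apply_tmul (ζ : V ≃ₗ[k] V) (x : V) (a b : V) :
    wedge31 k V ζ x (a ⊗ₜ[k] b) =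
      ζ (ζ x) ⊗ₜ[k] (a ⊗ₜ[k] b) + ζ a ⊗ₜ[k] (ζ b ⊗ₜ[k] x) - ζ a ⊗ₜ[k] (ζ x ⊗ₜ[k] b) := by
  simp only [wedge31, LinearMap.sub_apply, LinearMap.add_apply, LinearMap.coe_comp,
    Function.comp_apply, TensorProduct.mk_apply, TensorProduct.map_tmul,
    LinearEquiv.coe_coe, LinearMap.flip_apply, TensorProduct.assoc_tmul]

lemma wedge31_wedge2 (ζ : V ≃ₗ[k] V) (x u v : V) :
    wedge31 k V ζ x (wedge2 k V ζ u v) = wedge3 k V ζ x u v := by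
  simp only [wedge2, map_sub, wedge31_apply_tmul, wedge3]
  abel

lemma map_zz_wedge2 (ζ : V ≃ₗ[k] V) (u v : V) :
    TensorProduct.map ζ.toLinearMap ζ.toLinearMap (wedge2 k V ζ u v) =
      wedge2 k V ζ (ζ u) (ζ v) := by
  simp [wedge2, tmul_sub, sub_tmul]

lemma map_ss_wedge2 (ζ : V ≃ₗ[k] V) (u v : V) :
    TensorProduct.map ζ.symm.toLinearMap ζ.symm.toLinearMap (wedge2 k V ζ (ζ u) (ζ v)) =
      wedge2 k V ζ u v := by
  simp [wedge2, tmul_sub, sub_tmul]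

lemma Yprime_eq (ζ : V ≃ₗ[k] V) (q : k) (R : V ⊗[k] V →ₗ[k] V ⊗[k] V) :
    skewY k V q (Rprime k V ζ R) =
      TensorProduct.map ζ.symm.toLinearMap ζ.symm.toLinearMap ∘ₗ skewY k V q R ∘ₗ
        TensorProduct.map ζ.toLinearMap ζ.toLinearMap := by
  refine TensorProduct.ext' ?_
  intro a b
  simp only [LinearMap.comp_apply, TensorProduct.map_tmul, LinearEquiv.coe_coe]
  rw [skewY_apply, skewY_apply]
  simp only [Rprime, LinearMap.comp_apply, TensorProduct.map_tmul, LinearEquiv.coe_coe,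
    map_sub, map_smul, LinearEquiv.symm_apply_apply]

lemma wedge31_add (ζ : V ≃ₗ[k] V) (x₁ x₂ : V) :
    wedge31 k V ζ (x₁ + x₂) = wedge31 k V ζ x₁ + wedge31 k V ζ x₂ := by
  simp only [wedge31, map_add, TensorProduct.map_add_right, LinearMap.add_comp,
    LinearMap.comp_add]
  module

lemma wedge31_smul (ζ : V ≃ₗ[k] V) (c : k) (x : V) :
    wedge31 k V ζ (c • x) = c • wedge31 k V ζ x := by
  simp only [wedge31, map_smul, TensorProduct.map_smul_right, LinearMap.smul_comp,
    LinearMap.comp_smul]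
  module

/-- the wedge multiplication, packaged as a bilinear map -/
noncomputable def ellBil (ζ : V ≃ₗ[k] V) (Y : V ⊗[k] V →ₗ[k] V ⊗[k] V)
    (Ω : V ⊗[k] (V ⊗[k] V) →ₗ[k] k) : V →ₗ[k] V →ₗ[k] Module.Dual k V :=
  LinearMap.mk₂ k (ell k V ζ Y Ω)
    (fun x₁ x₂ y => by
      ext z
      simp [ell, wedge31_add])
    (fun c x y => by
      ext z
      simp [ell, wedge31_smul])
    (fun x y₁ y₂ => by
      ext z
      simp [ell, tmul_add, add_tmul, map_add])
    (fun c x y => by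
      ext z
      simp only [ell, LinearMap.coe_comp, Function.comp_apply, TensorProduct.mk_apply,
        LinearMap.smul_apply, map_smul, ← TensorProduct.smul_tmul', smul_eq_mul])

lemma ellBil_apply (ζ : V ≃ₗ[k] V) (Y : V ⊗[k] V →ₗ[k] V ⊗[k] V)
    (Ω : V ⊗[k] (V ⊗[k] V) →ₗ[k] k) (x y : V) :
    ellBil ζ Y Ω x y = ell k V ζ Y Ω x y := rfl

/-- the skewsymmetrizer squares to `(q+1)` times itself -/
lemma skewY_skewY {q : k} {R : V ⊗[k] V →ₗ[k] V ⊗[k] V}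
    (hR : IsHeckeSymmetry k V q R) (w : V ⊗[k] V) :
    skewY k V q R (skewY k V q R w) = (q + 1) • skewY k V q R w := by
  have h0 := LinearMap.ext_iff.mp hR.2.2 w
  simp only [LinearMap.comp_apply, LinearMap.sub_apply, LinearMap.add_apply,
    LinearMap.smul_apply, LinearMap.id_apply, LinearMap.zero_apply, map_add] at h0
  have hc : R (R w) = q • R w + q • w - R w := by
    rw [← sub_eq_zero]
    rw [show R (R w) - (q • R w + q • w - R w) =
      R (R w) - q • R w + (R w - q • w) from by module, h0]
  simp only [skewY_apply, map_sub, map_smul, hc]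
  module

end Aux13

namespace Aux13

open TensorProduct LinearMap Module

variable {k V : Type} [Field k] [AddCommGroup V] [Module k V]

lemma wedge2_mem_range {ζ : V ≃ₗ[k] V} {q : k} {R : V ⊗[k] V →ₗ[k] V ⊗[k] V}
    (hY : LinearMap.range (skewY k V q R) = Ups2 k V ζ) (u v : V) :
    ∃ w : V ⊗[k] V, skewY k V q R w = wedge2 k V ζ u v := by
  have : wedge2 k V ζ u v ∈ Ups2 k V ζ := Submodule.subset_span ⟨u, v, rfl⟩
  rw [← hY] at this
  exact this

lemma eig_wedge2 {ζ : V ≃ₗ[k] V} {q : k} {R : V ⊗[k] V →ₗ[k] V ⊗[k] V}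
    (hR : IsHeckeSymmetry k V q R)
    (hY : LinearMap.range (skewY k V q R) = Ups2 k V ζ) (u v : V) :
    skewY k V q R (wedge2 k V ζ u v) = (q + 1) • wedge2 k V ζ u v := by
  obtain ⟨w, hw⟩ := wedge2_mem_range hY u v
  rw [← hw, skewY_skewY hR, hw]

lemma eig'_wedge2 {ζ : V ≃ₗ[k] V} {q : k} {R : V ⊗[k] V →ₗ[k] V ⊗[k] V}
    (hR : IsHeckeSymmetry k V q R)
    (hY : LinearMap.range (skewY k V q R) = Ups2 k V ζ) (u v : V) :
    skewY k V q (Rprime k V ζ R) (wedge2 k V ζ u v) = (q + 1) • wedge2 k V ζ u v := by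
  rw [Yprime_eq]
  simp only [LinearMap.comp_apply]
  rw [map_zz_wedge2, eig_wedge2 hR hY, map_smul, map_ss_wedge2]

lemma range'_wedge2 {ζ : V ≃ₗ[k] V} {q : k} {R : V ⊗[k] V →ₗ[k] V ⊗[k] V}
    (hY : LinearMap.range (skewY k V q R) = Ups2 k V ζ) (u v : V) :
    ∃ w : V ⊗[k] V, skewY k V q (Rprime k V ζ R) w = wedge2 k V ζ u v := by
  obtain ⟨w, hw⟩ := wedge2_mem_range hY (ζ u) (ζ v)
  refine ⟨TensorProduct.map ζ.symm.toLinearMap ζ.symm.toLinearMap w, ?_⟩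
  rw [Yprime_eq]
  simp only [LinearMap.comp_apply]
  have : (TensorProduct.map ζ.toLinearMap ζ.toLinearMap)
      ((TensorProduct.map ζ.symm.toLinearMap ζ.symm.toLinearMap) w) = w := by
    rw [← LinearMap.comp_apply, ← TensorProduct.map_comp]
    simp [LinearEquiv.comp_coe]
  rw [this, hw, map_ss_wedge2]

/-- the fundamental antisymmetry identity `(K)` -/
lemma ellK {ζ : V ≃ₗ[k] V} {q : k} {Yop : V ⊗[k] V →ₗ[k] V ⊗[k] V}
    {ω : AlternatingMap k V k (Fin 3)} {Ω : V ⊗[k] (V ⊗[k] V) →ₗ[k] k}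
    (hΩ : ∀ x y z : V, Ω (wedge3 k V ζ x y z) = ω ![x, y, z])
    (heig : ∀ u v : V, Yop (wedge2 k V ζ u v) = (q + 1) • wedge2 k V ζ u v)
    (x y z : V) :
    ell k V ζ Yop Ω x y z - ell k V ζ Yop Ω x z y = (q + 1) * ω ![x, y, z] := by
  rw [ell_apply, ell_apply, ← map_sub, ← map_sub, ← map_sub]
  have h1 : ζ y ⊗ₜ[k] z - ζ z ⊗ₜ[k] y = wedge2 k V ζ y z := rfl
  rw [h1, heig, map_smul, map_smul, wedge31_wedge2, hΩ, smul_eq_mul]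

/-- the "shape C" degeneration `ℓ x y = ρ x • β y` is impossible -/
lemma shapeC {ζ : V ≃ₗ[k] V} {Yop : V ⊗[k] V →ₗ[k] V ⊗[k] V}
    {ω : AlternatingMap k V k (Fin 3)} (hω : ω ≠ 0)
    {Ω : V ⊗[k] (V ⊗[k] V) →ₗ[k] k}
    (hΩ : ∀ x y z : V, Ω (wedge3 k V ζ x y z) = ω ![x, y, z])
    (hrange : ∀ u v : V, ∃ w : V ⊗[k] V, Yop w = wedge2 k V ζ u v)
    (ρ : V → k) (β : V → Module.Dual k V)
    (hstruct : ∀ x y, ell k V ζ Yop Ω x y = ρ x • β y) : False := by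
  have hval : ∀ x y z, ell k V ζ Yop Ω x y z = ρ x * β y z := by
    intro x y z; rw [hstruct]; rfl
  have key : ∀ x (a b : V), Ω (wedge31 k V ζ x (Yop (a ⊗ₜ[k] b))) = ρ x * β (ζ.symm a) b := by
    intro x a b
    have h := hval x (ζ.symm a) b
    rw [ell_apply, ζ.apply_symm_apply] at h
    exact h
  -- get a triple where ω does not vanish
  obtain ⟨t, ht⟩ := exists_omega_ne_zero hω
  have homega : ∀ (u v : V), ∃ w, (∀ x, ω ![x, u, v] = Ω (wedge31 k V ζ x (Yop w))) := by
    intro u v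
    obtain ⟨w, hw⟩ := hrange u v
    exact ⟨w, fun x => by rw [hw, wedge31_wedge2, hΩ]⟩
  by_cases hρ : ∀ x, ρ x = 0
  · -- ω would vanish identically
    apply hω
    have hzero : ∀ x w, Ω (wedge31 k V ζ x (Yop w)) = 0 := by
      intro x w
      induction w using TensorProduct.induction_on with
      | zero => simp
      | tmul a b => rw [key, hρ, zero_mul]
      | add w₁ w₂ ih₁ ih₂ => rw [map_add, map_add, map_add, ih₁, ih₂, add_zero]
    ext v
    rw [← vec3_eta v]
    obtain ⟨w, hw⟩ := homega (v 1) (v 2)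
    rw [hw (v 0), hzero]
    simp
  · push_neg at hρ
    obtain ⟨x₀, hx₀⟩ := hρ
    set C : V ⊗[k] V → k := fun w => Ω (wedge31 k V ζ x₀ (Yop w)) / ρ x₀ with hC
    have key2 : ∀ x w, Ω (wedge31 k V ζ x (Yop w)) = ρ x * C w := by
      intro x w
      induction w using TensorProduct.induction_on with
      | zero => simp [hC]
      | tmul a b =>
          rw [key]
          have hCt : C (a ⊗ₜ[k] b) = β (ζ.symm a) b := by
            rw [hC]
            simp only
            rw [key, mul_comm, mul_div_assoc, div_self hx₀, mul_one]
          rw [hCt]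
      | add w₁ w₂ ih₁ ih₂ =>
          have hCadd : C (w₁ + w₂) = C w₁ + C w₂ := by
            simp only [hC, map_add, add_div]
          rw [map_add, map_add, map_add, ih₁, ih₂, hCadd, mul_add]
    obtain ⟨w12, hw12⟩ := homega (t 1) (t 2)
    obtain ⟨w02, hw02⟩ := homega (t 0) (t 2)
    have h1 : ω ![t 0, t 1, t 2] = ρ (t 0) * C w12 := by rw [hw12, key2]
    have hρ0 : ρ (t 0) ≠ 0 := fun h => ht (by rw [h1, h, zero_mul])
    have h2 : ρ (t 0) * C w02 = 0 := by
      rw [← key2, ← hw02, omega_eq01]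
    have hC02 : C w02 = 0 := by
      rcases mul_eq_zero.mp h2 with h | h
      · exact absurd h hρ0
      · exact h
    have h3 : ω ![t 1, t 0, t 2] = ρ (t 1) * C w02 := by rw [hw02, key2]
    rw [hC02, mul_zero, omega_swap01] at h3
    exact ht (by rw [← neg_eq_zero]; exact h3.symm ▸ rfl)

end Aux13

namespace Aux13

open TensorProduct LinearMap Module

variable {k V : Type} [Field k] [AddCommGroup V] [Module k V]

/-- the twist identity: `ℓ'_{xy}(z) = δ · ℓ_{ζx,ζy}(ζz)` for a nonzero scalar `δ` -/
lemma twist {ζ : V ≃ₗ[k] V} {q : k} {R : V ⊗[k] V →ₗ[k] V ⊗[k] V}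
    (hdim : Module.finrank k V = 3)
    (hY : LinearMap.range (skewY k V q R) = Ups2 k V ζ)
    {ω : AlternatingMap k V k (Fin 3)} (hω : ω ≠ 0)
    {Ω : V ⊗[k] (V ⊗[k] V) →ₗ[k] k}
    (hΩ : ∀ x y z : V, Ω (wedge3 k V ζ x y z) = ω ![x, y, z]) :
    ∃ δ : k, δ ≠ 0 ∧ ∀ x y z : V,
      ell k V ζ (skewY k V q (Rprime k V ζ R)) Ω x y z =
        δ * ell k V ζ (skewY k V q R) Ω (ζ x) (ζ y) (ζ z) := by
  haveI : Module.Finite k V :=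
    Module.finite_of_finrank_pos (by rw [hdim]; norm_num)
  let e : Basis (Fin 3) k V := Module.finBasisOfFinrankEq k V hdim
  set ωζ : AlternatingMap k V k (Fin 3) := ω.compLinearMap ζ.symm.toLinearMap with hωζdef
  have hω_det : ω = ω ⇑e • e.det := AlternatingMap.eq_smul_basis_det e ω
  have hωζ_det : ωζ = ωζ ⇑e • e.det := AlternatingMap.eq_smul_basis_det e ωζ
  have he : ω ⇑e ≠ 0 := by
    intro h
    apply hω
    rw [hω_det, h, zero_smul]
  have hωζne : ωζ ≠ 0 := by
    intro h
    apply hω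
    ext v
    have h1 : ωζ (fun i => ζ (v i)) = 0 := by rw [h]; rfl
    rw [hωζdef, AlternatingMap.compLinearMap_apply] at h1
    have h2 : (fun i => ζ.symm.toLinearMap (ζ (v i))) = v := by
      funext i; simp
    rw [h2] at h1
    simpa using h1
  have heζ : ωζ ⇑e ≠ 0 := by
    intro h
    apply hωζne
    rw [hωζ_det, h, zero_smul]
  refine ⟨ωζ ⇑e / ω ⇑e, div_ne_zero heζ he, ?_⟩
  set δ := ωζ ⇑e / ω ⇑e with hδ
  have hωζω : ∀ v : Fin 3 → V, ωζ v = δ * ω v := by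
    intro v
    rw [hωζ_det]
    conv_rhs => rw [hω_det]
    simp only [AlternatingMap.smul_apply, smul_eq_mul, hδ]
    field_simp
  -- the key span-induction claim
  have keyspan : ∀ x : V, ∀ w ∈ Ups2 k V ζ,
      Ω (wedge31 k V ζ x (TensorProduct.map ζ.symm.toLinearMap ζ.symm.toLinearMap w)) =
        δ * Ω (wedge31 k V ζ (ζ x) w) := by
    intro x w hw
    induction hw using Submodule.span_induction with
    | mem w hmem =>
        obtain ⟨u, v, rfl⟩ := hmem
        have hss : (TensorProduct.map ζ.symm.toLinearMap ζ.symm.toLinearMap)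
            (wedge2 k V ζ u v) = wedge2 k V ζ (ζ.symm u) (ζ.symm v) := by
          have := map_ss_wedge2 ζ (ζ.symm u) (ζ.symm v)
          rwa [ζ.apply_symm_apply, ζ.apply_symm_apply] at this
        rw [hss, wedge31_wedge2, wedge31_wedge2, hΩ, hΩ]
        have h1 : ω ![x, ζ.symm u, ζ.symm v] = ωζ ![ζ x, u, v] := by
          rw [hωζdef, AlternatingMap.compLinearMap_apply]
          congr 1
          funext i
          fin_cases i <;> simp
        rw [h1, hωζω]
    | zero => simp
    | add w₁ w₂ _ _ ih₁ ih₂ => simp only [map_add, mul_add, ih₁, ih₂]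
    | smul c w _ ih => simp only [map_smul, smul_eq_mul, ih]; ring
  intro x y z
  rw [ell_apply, ell_apply, Yprime_eq]
  simp only [LinearMap.comp_apply, TensorProduct.map_tmul, LinearEquiv.coe_coe]
  exact keyspan x _ (hY ▸ LinearMap.mem_range_self _ _)

end Aux13

namespace Aux13

open TensorProduct LinearMap Module

variable {k V : Type} [Field k] [AddCommGroup V] [Module k V]

/-- predual basis of a basis of the dual space -/
noncomputable def bV [Module.Finite k V] (B : Basis (Fin 3) k (Module.Dual k V)) :
    Basis (Fin 3) k V :=
  B.dualBasis.map (Module.evalEquiv k V).symm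

lemma B_bV [Module.Finite k V] (B : Basis (Fin 3) k (Module.Dual k V)) (a b : Fin 3) :
    B a (bV B b) = if a = b then 1 else 0 := by
  have h := Module.apply_evalEquiv_symm_apply k V (B a) (B.dualBasis b)
  rw [bV, Basis.map_apply]
  rw [h, Basis.dualBasis_apply_self]

lemma B_sum [Module.Finite k V] (B : Basis (Fin 3) k (Module.Dual k V)) (c : Fin 3 → k)
    (a : Fin 3) : B a (∑ b, c b • bV B b) = c a := by
  rw [map_sum]
  rw [Finset.sum_eq_single a]
  · rw [map_smul, B_bV, if_pos rfl, smul_eq_mul, mul_one]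
  · intro b _ hb
    rw [map_smul, B_bV, if_neg (Ne.symm hb), smul_eq_mul, mul_zero]
  · intro h
    exact absurd (Finset.mem_univ a) h

lemma coord_repr [Module.Finite k V] (B : Basis (Fin 3) k (Module.Dual k V)) (x : V)
    (a : Fin 3) : B a x = (bV B).repr x a := by
  conv_lhs => rw [← (bV B).sum_repr x]
  exact B_sum B _ a

lemma x_expand [Module.Finite k V] (B : Basis (Fin 3) k (Module.Dual k V)) (x : V) :
    x = ∑ a, B a x • bV B a := by
  conv_lhs => rw [← (bV B).sum_repr x]
  apply Finset.sum_congr rfl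
  intro a _
  rw [coord_repr]

lemma coords_surj [Module.Finite k V] (B : Basis (Fin 3) k (Module.Dual k V))
    (v : (Fin 3 ⊕ Fin 3) → k) :
    ∃ x y : V, Sum.elim (coords k V B x) (coords k V B y) = v := by
  refine ⟨∑ a, v (Sum.inl a) • bV B a, ∑ b, v (Sum.inr b) • bV B b, ?_⟩
  funext s
  rcases s with a | b
  · simp only [Sum.elim_inl, coords]
    rw [B_sum]
  · simp only [Sum.elim_inr, coords]
    rw [B_sum]

lemma pfunext [Infinite k] [Module.Finite k V] (B : Basis (Fin 3) k (Module.Dual k V))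
    {p p' : PolyVV k} (h : ∀ x y : V, pEval k V B p x y = pEval k V B p' x y) : p = p' := by
  apply MvPolynomial.funext
  intro v
  obtain ⟨x, y, hxy⟩ := coords_surj B v
  rw [← hxy]
  exact h x y

lemma dual_ext [Module.Finite k V] (B : Basis (Fin 3) k (Module.Dual k V))
    {φ ψ : Module.Dual k V} (h : ∀ i, φ (bV B i) = ψ (bV B i)) : φ = ψ :=
  (bV B).ext h

lemma dual_expand [Module.Finite k V] (B : Basis (Fin 3) k (Module.Dual k V))
    (φ : Module.Dual k V) : φ = ∑ i, φ (bV B i) • B i := by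
  apply dual_ext B
  intro j
  rw [LinearMap.sum_apply]
  rw [Finset.sum_eq_single j]
  · rw [LinearMap.smul_apply, B_bV, if_pos rfl, smul_eq_mul, mul_one]
  · intro b _ hb
    rw [LinearMap.smul_apply, B_bV, if_neg hb, smul_eq_mul, mul_zero]
  · intro h'
    exact absurd (Finset.mem_univ j) h'

end Aux13

namespace Aux13

open TensorProduct LinearMap Module MvPolynomial

variable {k V : Type} [Field k] [AddCommGroup V] [Module k V]

/-- the polynomial family representing a bilinear dual-valued map, bidegree (1,1) -/
noncomputable def polyL [Module.Finite k V] (B : Basis (Fin 3) k (Module.Dual k V))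
    (E : V →ₗ[k] V →ₗ[k] Module.Dual k V) : Fin 3 → PolyVV k := fun i =>
  ∑ a, ∑ b, MvPolynomial.C (E (bV B a) (bV B b) (bV B i)) * X (Sum.inl a) * X (Sum.inr b)

/-- polynomial family for the diagonal of `E`, in the first variable group -/
noncomputable def polyA [Module.Finite k V] (B : Basis (Fin 3) k (Module.Dual k V))
    (E : V →ₗ[k] V →ₗ[k] Module.Dual k V) : Fin 3 → PolyVV k := fun i =>
  ∑ a, ∑ b, MvPolynomial.C (E (bV B a) (bV B b) (bV B i)) * X (Sum.inl a) * X (Sum.inl b)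

/-- polynomial family for the diagonal of `E`, in the second variable group -/
noncomputable def polyB [Module.Finite k V] (B : Basis (Fin 3) k (Module.Dual k V))
    (E : V →ₗ[k] V →ₗ[k] Module.Dual k V) : Fin 3 → PolyVV k := fun i =>
  ∑ a, ∑ b, MvPolynomial.C (E (bV B a) (bV B b) (bV B i)) * X (Sum.inr a) * X (Sum.inr b)

lemma polyL_WH [Module.Finite k V] (B : Basis (Fin 3) k (Module.Dual k V))
    (E : V →ₗ[k] V →ₗ[k] Module.Dual k V) (i : Fin 3) :
    (polyL B E i).IsWeightedHomogeneous bideg (1, 1) := by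
  apply IsWeightedHomogeneous.sum
  intro a _
  apply IsWeightedHomogeneous.sum
  intro b _
  have h := ((isWeightedHomogeneous_C bideg (E (bV B a) (bV B b) (bV B i))).mul
    (isWeightedHomogeneous_X k bideg (Sum.inl a))).mul
    (isWeightedHomogeneous_X k bideg (Sum.inr b))
  simpa [bideg] using h

lemma polyA_WH [Module.Finite k V] (B : Basis (Fin 3) k (Module.Dual k V))
    (E : V →ₗ[k] V →ₗ[k] Module.Dual k V) (i : Fin 3) :
    (polyA B E i).IsWeightedHomogeneous bideg (2, 0) := by
  apply IsWeightedHomogeneous.sum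
  intro a _
  apply IsWeightedHomogeneous.sum
  intro b _
  have h := ((isWeightedHomogeneous_C bideg (E (bV B a) (bV B b) (bV B i))).mul
    (isWeightedHomogeneous_X k bideg (Sum.inl a))).mul
    (isWeightedHomogeneous_X k bideg (Sum.inl b))
  simpa [bideg] using h

lemma polyB_WH [Module.Finite k V] (B : Basis (Fin 3) k (Module.Dual k V))
    (E : V →ₗ[k] V →ₗ[k] Module.Dual k V) (i : Fin 3) :
    (polyB B E i).IsWeightedHomogeneous bideg (0, 2) := by
  apply IsWeightedHomogeneous.sum
  intro a _
  apply IsWeightedHomogeneous.sum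
  intro b _
  have h := ((isWeightedHomogeneous_C bideg (E (bV B a) (bV B b) (bV B i))).mul
    (isWeightedHomogeneous_X k bideg (Sum.inr a))).mul
    (isWeightedHomogeneous_X k bideg (Sum.inr b))
  simpa [bideg] using h

lemma bilin_expand [Module.Finite k V] (B : Basis (Fin 3) k (Module.Dual k V))
    (E : V →ₗ[k] V →ₗ[k] Module.Dual k V) (x y : V) (i : Fin 3) :
    E x y (bV B i) = ∑ a, ∑ b, E (bV B a) (bV B b) (bV B i) * B a x * B b y := by
  have h1 : ∀ y' : V, E (∑ a, B a x • bV B a) y' (bV B i) =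
      ∑ a, B a x * E (bV B a) y' (bV B i) := by
    intro y'
    rw [map_sum, LinearMap.sum_apply, LinearMap.sum_apply]
    apply Finset.sum_congr rfl
    intro a _
    rw [map_smul]
    simp [smul_eq_mul]
  have h2 : ∀ a : Fin 3, E (bV B a) (∑ b, B b y • bV B b) (bV B i) =
      ∑ b, B b y * E (bV B a) (bV B b) (bV B i) := by
    intro a
    rw [map_sum, LinearMap.sum_apply]
    apply Finset.sum_congr rfl
    intro b _
    rw [map_smul]
    simp [smul_eq_mul]
  conv_lhs => rw [x_expand B x, x_expand B y]
  rw [h1]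
  apply Finset.sum_congr rfl
  intro a _
  rw [h2, Finset.mul_sum]
  apply Finset.sum_congr rfl
  intro b _
  ring

lemma polyL_eval [Module.Finite k V] (B : Basis (Fin 3) k (Module.Dual k V))
    (E : V →ₗ[k] V →ₗ[k] Module.Dual k V) (i : Fin 3) (x y : V) :
    pEval k V B (polyL B E i) x y = E x y (bV B i) := by
  rw [bilin_expand B E x y i]
  simp only [pEval, polyL, map_sum, map_mul, eval_C, eval_X, Sum.elim_inl, Sum.elim_inr, coords]

lemma polyA_eval [Module.Finite k V] (B : Basis (Fin 3) k (Module.Dual k V))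
    (E : V →ₗ[k] V →ₗ[k] Module.Dual k V) (i : Fin 3) (x y : V) :
    pEval k V B (polyA B E i) x y = E x x (bV B i) := by
  rw [bilin_expand B E x x i]
  simp only [pEval, polyA, map_sum, map_mul, eval_C, eval_X, Sum.elim_inl, Sum.elim_inr, coords]

lemma polyB_eval [Module.Finite k V] (B : Basis (Fin 3) k (Module.Dual k V))
    (E : V →ₗ[k] V →ₗ[k] Module.Dual k V) (i : Fin 3) (x y : V) :
    pEval k V B (polyB B E i) x y = E y y (bV B i) := by
  rw [bilin_expand B E y y i]
  simp only [pEval, polyB, map_sum, map_mul, eval_C, eval_X, Sum.elim_inl, Sum.elim_inr, coords]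

end Aux13

namespace Aux13

open TensorProduct LinearMap Module MvPolynomial

variable {k V : Type} [Field k] [AddCommGroup V] [Module k V]

lemma sum_smul_B_apply [Module.Finite k V] (B : Basis (Fin 3) k (Module.Dual k V))
    (c : Fin 3 → k) (i : Fin 3) : (∑ j, c j • B j) (bV B i) = c i := by
  rw [LinearMap.sum_apply, Finset.sum_eq_single i]
  · rw [LinearMap.smul_apply, B_bV, if_pos rfl, smul_eq_mul, mul_one]
  · intro b _ hb
    rw [LinearMap.smul_apply, B_bV, if_neg hb, smul_eq_mul, mul_zero]
  · intro h'
    exact absurd (Finset.mem_univ i) h'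

lemma pEval_mul (B : Basis (Fin 3) k (Module.Dual k V)) (p p' : PolyVV k) (x y : V) :
    pEval k V B (p * p') x y = pEval k V B p x y * pEval k V B p' x y := by
  simp [pEval]

lemma pEval_const (B : Basis (Fin 3) k (Module.Dual k V)) {p : PolyVV k}
    (hp : p.IsWeightedHomogeneous bideg (0, 0)) (x y x' y' : V) :
    pEval k V B p x y = pEval k V B p x' y' := by
  have h1 : pEval k V B p x y = pEval k V B p x' y :=
    eval_eq_of_agree_inr hp _ _ (fun b => rfl)
  have h2 : pEval k V B p x' y = pEval k V B p x' y' :=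
    eval_eq_of_agree_inl hp _ _ (fun a => rfl)
  rw [h1, h2]

lemma pEval_xonly (B : Basis (Fin 3) k (Module.Dual k V)) {p : PolyVV k} {m : ℕ}
    (hp : p.IsWeightedHomogeneous bideg (m, 0)) (x y y' : V) :
    pEval k V B p x y = pEval k V B p x y' :=
  eval_eq_of_agree_inl hp _ _ (fun a => rfl)

lemma pEval_yonly (B : Basis (Fin 3) k (Module.Dual k V)) {p : PolyVV k} {n : ℕ}
    (hp : p.IsWeightedHomogeneous bideg (0, n)) (x x' y : V) :
    pEval k V B p x y = pEval k V B p x' y :=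
  eval_eq_of_agree_inr hp _ _ (fun b => rfl)

lemma WH_neg {p : PolyVV k} {w : ℕ × ℕ} (hp : p.IsWeightedHomogeneous bideg w) :
    (-p).IsWeightedHomogeneous bideg w := by
  intro d hd
  exact hp (by simpa using hd)

/-- case analysis when `p₀ = 0` : the relation `G1·A + G2·B = 0` is impossible -/
lemma caseZero [Module.Finite k V] [Infinite k] (B : Basis (Fin 3) k (Module.Dual k V))
    (E E' : V →ₗ[k] V →ₗ[k] Module.Dual k V)
    (hdiagE : ∀ φ₀ : Module.Dual k V, (∀ x, ∃ c : k, E x x = c • φ₀) → False)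
    (hdiagE' : ∀ φ₀ : Module.Dual k V, (∀ y, ∃ c : k, E' y y = c • φ₀) → False)
    (G1 G2 : PolyVV k)
    (hw1 : ∃ w, G1.IsWeightedHomogeneous bideg w)
    (hw2 : ∃ w, G2.IsWeightedHomogeneous bideg w)
    (hcop : IsRelPrime G1 G2)
    (hrel : ∀ i, G1 * polyA B E i + G2 * polyB B E' i = 0) : False := by
  classical
  have hAzero : (∀ i, polyA B E i = 0) → False := by
    intro h
    apply hdiagE 0
    intro x
    refine ⟨0, ?_⟩
    rw [zero_smul]
    apply dual_ext B
    intro i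
    have := polyA_eval B E i x x
    rw [h i] at this
    simp [pEval] at this
    rw [← this]
    rfl
  have hBzero : (∀ i, polyB B E' i = 0) → False := by
    intro h
    apply hdiagE' 0
    intro y
    refine ⟨0, ?_⟩
    rw [zero_smul]
    apply dual_ext B
    intro i
    have := polyB_eval B E' i y y
    rw [h i] at this
    simp [pEval] at this
    rw [← this]
    rfl
  by_cases hG1 : G1 = 0
  · by_cases hG2 : G2 = 0
    · exact not_isUnit_X (hcop (hG1 ▸ dvd_zero _) (hG2 ▸ dvd_zero _))
    · apply hBzero
      intro i
      have := hrel i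
      rw [hG1, zero_mul, zero_add] at this
      exact (mul_eq_zero.mp this).resolve_left hG2
  · by_cases hG2 : G2 = 0
    · apply hAzero
      intro i
      have := hrel i
      rw [hG2, zero_mul, add_zero] at this
      exact (mul_eq_zero.mp this).resolve_left hG1
    · -- main case
      have hdvd1 : ∀ i, G1 ∣ polyB B E' i := by
        intro i
        apply hcop.dvd_of_dvd_mul_left (y := G2)
        exact ⟨-(polyA B E i), by linear_combination hrel i⟩
      have hdvd2 : ∀ i, G2 ∣ polyA B E i := by
        intro i
        apply hcop.symm.dvd_of_dvd_mul_left (y := G1)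
        exact ⟨-(polyB B E' i), by linear_combination hrel i⟩
      choose Ah hAh using hdvd2
      choose Bh hBh using hdvd1
      have hneg : ∀ i, Bh i = -(Ah i) := by
        intro i
        have h := hrel i
        rw [hAh i, hBh i] at h
        have h2 : (G1 * G2) * (Ah i + Bh i) = 0 := by linear_combination h
        have h3 := (mul_eq_zero.mp h2).resolve_left (mul_ne_zero hG1 hG2)
        linear_combination h3
      obtain ⟨i₀, hi₀⟩ : ∃ i, polyA B E i ≠ 0 := by
        by_contra hall
        push_neg at hall
        exact hAzero hall
      have hAh0 : Ah i₀ ≠ 0 := by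
        intro h
        apply hi₀
        rw [hAh i₀, h, mul_zero]
      have hBh0 : Bh i₀ ≠ 0 := by rw [hneg]; simpa using hAh0
      obtain ⟨w1, hw1'⟩ := hw1
      obtain ⟨w2, hw2'⟩ := hw2
      obtain ⟨wa, hwa, hsuma⟩ := factor_WH hw2' (by rw [← hAh i₀]; exact polyA_WH B E i₀) hG2 hAh0
      obtain ⟨wb, hwb, hsumb⟩ := factor_WH hw1' (by rw [← hBh i₀]; exact polyB_WH B E' i₀) hG1 hBh0
      -- the weights of Ah i₀ and Bh i₀ agree
      have hwab : wb = wa := by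
        have h1 : (Bh i₀).IsWeightedHomogeneous bideg wa := by
          rw [hneg]
          exact WH_neg hwa
        exact weight_unique hBh0 hwb h1
      have ha1 : w2.1 + wa.1 = 2 := by
        have := congrArg Prod.fst hsuma; simpa using this
      have ha2 : w2.2 + wa.2 = 0 := by
        have := congrArg Prod.snd hsuma; simpa using this
      have hb1 : w1.1 + wa.1 = 0 := by
        have := congrArg Prod.fst hsumb; rw [hwab] at this; simpa using this
      have hwa00 : wa = (0, 0) := by
        have h1 : wa.1 = 0 := by omega
        have h2 : wa.2 = 0 := by omega
        exact Prod.ext h1 h2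
      -- all Ah i are constants
      have hAhWH : ∀ i, (Ah i).IsWeightedHomogeneous bideg (0, 0) := by
        intro i
        by_cases h : Ah i = 0
        · rw [h]; exact isWeightedHomogeneous_zero k _ _
        · have hAi : polyA B E i ≠ 0 := by
            rw [hAh i]; exact mul_ne_zero hG2 h
          obtain ⟨w', hw', hsum'⟩ := factor_WH hw2'
            (by rw [← hAh i]; exact polyA_WH B E i) hG2 h
          have : w' = wa := by
            apply add_left_cancel (a := w2)
            rw [hsum', hsuma]
          rwa [this, hwa00] at hw'
      set cc : Fin 3 → k := fun i => pEval k V B (Ah i) 0 0 with hcc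
      have hccval : ∀ i x y, pEval k V B (Ah i) x y = cc i := by
        intro i x y
        rw [hcc]
        exact pEval_const B (hAhWH i) x y 0 0
      set φ₀ : Module.Dual k V := ∑ j, cc j • B j with hφ₀
      apply hdiagE φ₀
      intro x
      refine ⟨pEval k V B G2 x x, ?_⟩
      apply dual_ext B
      intro i
      have h1 : E x x (bV B i) = pEval k V B (polyA B E i) x x := (polyA_eval B E i x x).symm
      rw [h1, hAh i, pEval_mul, hccval]
      rw [LinearMap.smul_apply, hφ₀, sum_smul_B_apply, smul_eq_mul]

end Aux13

namespace Aux13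

open TensorProduct LinearMap Module MvPolynomial

variable {k V : Type} [Field k] [AddCommGroup V] [Module k V]

/-- case analysis for the relation `G0·L = G2·B` (missing middle term) -/
lemma caseR [Module.Finite k V] [Infinite k] (B : Basis (Fin 3) k (Module.Dual k V))
    (E0 E' : V →ₗ[k] V →ₗ[k] Module.Dual k V)
    (hdiagE0 : ∀ φ₀ : Module.Dual k V, (∀ x, ∃ c : k, E0 x x = c • φ₀) → False)
    (hdiagE' : ∀ φ₀ : Module.Dual k V, (∀ y, ∃ c : k, E' y y = c • φ₀) → False)
    (hshapeC0 : (∃ (ρ : V → k) (β : V → Module.Dual k V), ∀ x y, E0 x y = ρ x • β y) → False)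
    (G0 G2 : PolyVV k)
    (hw0 : ∃ w, G0.IsWeightedHomogeneous bideg w)
    (hw2 : ∃ w, G2.IsWeightedHomogeneous bideg w)
    (hcop : IsRelPrime G0 G2)
    (hrel : ∀ i, G0 * polyL B E0 i = G2 * polyB B E' i) : False := by
  classical
  have hLzero : (∀ i, polyL B E0 i = 0) → False := by
    intro h
    apply hdiagE0 0
    intro x
    refine ⟨0, ?_⟩
    rw [zero_smul]
    apply dual_ext B
    intro i
    have := polyL_eval B E0 i x x
    rw [h i] at this
    simp [pEval] at this
    rw [← this]
    rfl
  have hBzero : (∀ i, polyB B E' i = 0) → False := by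
    intro h
    apply hdiagE' 0
    intro y
    refine ⟨0, ?_⟩
    rw [zero_smul]
    apply dual_ext B
    intro i
    have := polyB_eval B E' i y y
    rw [h i] at this
    simp [pEval] at this
    rw [← this]
    rfl
  by_cases hG0 : G0 = 0
  · by_cases hG2 : G2 = 0
    · exact not_isUnit_X (hcop (hG0 ▸ dvd_zero _) (hG2 ▸ dvd_zero _))
    · apply hBzero
      intro i
      have := hrel i
      rw [hG0, zero_mul] at this
      exact (mul_eq_zero.mp this.symm).resolve_left hG2
  · by_cases hG2 : G2 = 0
    · apply hLzero
      intro i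
      have := hrel i
      rw [hG2, zero_mul] at this
      exact (mul_eq_zero.mp this).resolve_left hG0
    · -- main case: G0 divides each `polyB`
      have hdvd : ∀ i, G0 ∣ polyB B E' i := by
        intro i
        apply hcop.dvd_of_dvd_mul_left (y := G2)
        exact ⟨polyL B E0 i, (hrel i).symm⟩
      choose Bh hBh using hdvd
      have hcancel : ∀ i, polyL B E0 i = G2 * Bh i := by
        intro i
        apply mul_left_cancel₀ hG0
        rw [hrel i, hBh i]
        ring
      obtain ⟨i₀, hi₀⟩ : ∃ i, polyB B E' i ≠ 0 := by
        by_contra hall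
        push_neg at hall
        exact hBzero hall
      have hBh0 : Bh i₀ ≠ 0 := by
        intro h
        apply hi₀
        rw [hBh i₀, h, mul_zero]
      have hL0 : polyL B E0 i₀ ≠ 0 := by
        rw [hcancel i₀]
        exact mul_ne_zero hG2 hBh0
      obtain ⟨w0, hw0'⟩ := hw0
      obtain ⟨w2, hw2'⟩ := hw2
      obtain ⟨wb, hwb, hsumb⟩ := factor_WH hw0'
        (by rw [← hBh i₀]; exact polyB_WH B E' i₀) hG0 hBh0
      obtain ⟨wb', hwb', hsumb'⟩ := factor_WH hw2'
        (by rw [← hcancel i₀]; exact polyL_WH B E0 i₀) hG2 hBh0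
      have hww : wb' = wb := weight_unique hBh0 hwb' hwb
      rw [hww] at hsumb'
      -- wb.1 = 0, w2.1 = 1, w2.2 + wb.2 = 1
      have h01 : w0.1 + wb.1 = 0 := by have := congrArg Prod.fst hsumb; simpa using this
      have h21 : w2.1 + wb.1 = 1 := by have := congrArg Prod.fst hsumb'; simpa using this
      have h22 : w2.2 + wb.2 = 1 := by have := congrArg Prod.snd hsumb'; simpa using this
      have hwb1 : wb.1 = 0 := by omega
      have hw21 : w2.1 = 1 := by omega
      -- all Bh i share the same weight (or vanish)
      have hBhWH : ∀ i, (Bh i).IsWeightedHomogeneous bideg wb := by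
        intro i
        by_cases h : Bh i = 0
        · rw [h]; exact isWeightedHomogeneous_zero k _ _
        · obtain ⟨w', hw', hsum'⟩ := factor_WH hw2'
            (by rw [← hcancel i]; exact polyL_WH B E0 i) hG2 h
          have : w' = wb := by
            apply add_left_cancel (a := w2)
            rw [hsum', hsumb']
          rwa [this] at hw'
      rcases (by omega : wb.2 = 0 ∨ wb.2 = 1) with hwb2 | hwb2
      · -- wb = (0,0): all Bh are constants, E0 degenerates to a fixed line
        have hwb00 : wb = (0, 0) := Prod.ext hwb1 hwb2
        set cc : Fin 3 → k := fun i => pEval k V B (Bh i) 0 0 with hcc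
        have hccval : ∀ i x y, pEval k V B (Bh i) x y = cc i := by
          intro i x y
          exact pEval_const B (hwb00 ▸ hBhWH i) x y 0 0
        set φ₀ : Module.Dual k V := ∑ j, cc j • B j with hφ₀
        apply hdiagE0 φ₀
        intro x
        refine ⟨pEval k V B G2 x x, ?_⟩
        apply dual_ext B
        intro i
        have h1 : E0 x x (bV B i) = pEval k V B (polyL B E0 i) x x := (polyL_eval B E0 i x x).symm
        rw [h1, hcancel i, pEval_mul, hccval]
        rw [LinearMap.smul_apply, hφ₀, sum_smul_B_apply, smul_eq_mul]
      · -- wb = (0,1) and w2 = (1,0): shape C degeneration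
        have hwb01 : wb = (0, 1) := Prod.ext hwb1 hwb2
        have hw20 : w2 = (1, 0) := by
          have : w2.2 = 0 := by omega
          exact Prod.ext hw21 this
        apply hshapeC0
        refine ⟨fun x => pEval k V B G2 x 0, fun y => ∑ j, (pEval k V B (Bh j) 0 y) • B j, ?_⟩
        intro x y
        apply dual_ext B
        intro i
        have h1 : E0 x y (bV B i) = pEval k V B (polyL B E0 i) x y := (polyL_eval B E0 i x y).symm
        rw [h1, hcancel i, pEval_mul]
        rw [LinearMap.smul_apply, sum_smul_B_apply, smul_eq_mul]
        congr 1
        · exact pEval_xonly B (hw20 ▸ hw2') x y 0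
        · exact pEval_yonly B (hwb01 ▸ hBhWH i) x 0 y

/-- case analysis for the relation `G0·L = G1·A` (missing last term) -/
lemma caseL [Module.Finite k V] [Infinite k] (B : Basis (Fin 3) k (Module.Dual k V))
    (E0 E : V →ₗ[k] V →ₗ[k] Module.Dual k V)
    (hdiagE0 : ∀ φ₀ : Module.Dual k V, (∀ x, ∃ c : k, E0 x x = c • φ₀) → False)
    (hdiagE : ∀ φ₀ : Module.Dual k V, (∀ x, ∃ c : k, E x x = c • φ₀) → False)
    (hshapeB0 : (∃ (π : V → k) (α : V → Module.Dual k V), ∀ x y, E0 x y = π y • α x) → False)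
    (G0 G1 : PolyVV k)
    (hw0 : ∃ w, G0.IsWeightedHomogeneous bideg w)
    (hw1 : ∃ w, G1.IsWeightedHomogeneous bideg w)
    (hcop : IsRelPrime G0 G1)
    (hrel : ∀ i, G0 * polyL B E0 i = G1 * polyA B E i) : False := by
  classical
  have hLzero : (∀ i, polyL B E0 i = 0) → False := by
    intro h
    apply hdiagE0 0
    intro x
    refine ⟨0, ?_⟩
    rw [zero_smul]
    apply dual_ext B
    intro i
    have := polyL_eval B E0 i x x
    rw [h i] at this
    simp [pEval] at this
    rw [← this]
    rfl
  have hAzero : (∀ i, polyA B E i = 0) → False := by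
    intro h
    apply hdiagE 0
    intro x
    refine ⟨0, ?_⟩
    rw [zero_smul]
    apply dual_ext B
    intro i
    have := polyA_eval B E i x x
    rw [h i] at this
    simp [pEval] at this
    rw [← this]
    rfl
  by_cases hG0 : G0 = 0
  · by_cases hG1 : G1 = 0
    · exact not_isUnit_X (hcop (hG0 ▸ dvd_zero _) (hG1 ▸ dvd_zero _))
    · apply hAzero
      intro i
      have := hrel i
      rw [hG0, zero_mul] at this
      exact (mul_eq_zero.mp this.symm).resolve_left hG1
  · by_cases hG1 : G1 = 0
    · apply hLzero
      intro i
      have := hrel i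
      rw [hG1, zero_mul] at this
      exact (mul_eq_zero.mp this).resolve_left hG0
    · have hdvd : ∀ i, G0 ∣ polyA B E i := by
        intro i
        apply hcop.dvd_of_dvd_mul_left (y := G1)
        exact ⟨polyL B E0 i, (hrel i).symm⟩
      choose Ah hAh using hdvd
      have hcancel : ∀ i, polyL B E0 i = G1 * Ah i := by
        intro i
        apply mul_left_cancel₀ hG0
        rw [hrel i, hAh i]
        ring
      obtain ⟨i₀, hi₀⟩ : ∃ i, polyA B E i ≠ 0 := by
        by_contra hall
        push_neg at hall
        exact hAzero hall
      have hAh0 : Ah i₀ ≠ 0 := by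
        intro h
        apply hi₀
        rw [hAh i₀, h, mul_zero]
      obtain ⟨w0, hw0'⟩ := hw0
      obtain ⟨w1, hw1'⟩ := hw1
      obtain ⟨wa, hwa, hsuma⟩ := factor_WH hw0'
        (by rw [← hAh i₀]; exact polyA_WH B E i₀) hG0 hAh0
      obtain ⟨wa', hwa', hsuma'⟩ := factor_WH hw1'
        (by rw [← hcancel i₀]; exact polyL_WH B E0 i₀) hG1 hAh0
      have hww : wa' = wa := weight_unique hAh0 hwa' hwa
      rw [hww] at hsuma'
      have h02 : w0.2 + wa.2 = 0 := by have := congrArg Prod.snd hsuma; simpa using this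
      have h12 : w1.2 + wa.2 = 1 := by have := congrArg Prod.snd hsuma'; simpa using this
      have h11 : w1.1 + wa.1 = 1 := by have := congrArg Prod.fst hsuma'; simpa using this
      have hwa2 : wa.2 = 0 := by omega
      have hw12 : w1.2 = 1 := by omega
      have hAhWH : ∀ i, (Ah i).IsWeightedHomogeneous bideg wa := by
        intro i
        by_cases h : Ah i = 0
        · rw [h]; exact isWeightedHomogeneous_zero k _ _
        · obtain ⟨w', hw', hsum'⟩ := factor_WH hw1'
            (by rw [← hcancel i]; exact polyL_WH B E0 i) hG1 h
          have : w' = wa := by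
            apply add_left_cancel (a := w1)
            rw [hsum', hsuma']
          rwa [this] at hw'
      rcases (by omega : wa.1 = 0 ∨ wa.1 = 1) with hwa1 | hwa1
      · -- wa = (0,0): fixed line degeneration
        have hwa00 : wa = (0, 0) := Prod.ext hwa1 hwa2
        set cc : Fin 3 → k := fun i => pEval k V B (Ah i) 0 0 with hcc
        have hccval : ∀ i x y, pEval k V B (Ah i) x y = cc i := by
          intro i x y
          exact pEval_const B (hwa00 ▸ hAhWH i) x y 0 0
        set φ₀ : Module.Dual k V := ∑ j, cc j • B j with hφ₀
        apply hdiagE0 φ₀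
        intro x
        refine ⟨pEval k V B G1 x x, ?_⟩
        apply dual_ext B
        intro i
        have h1 : E0 x x (bV B i) = pEval k V B (polyL B E0 i) x x := (polyL_eval B E0 i x x).symm
        rw [h1, hcancel i, pEval_mul, hccval]
        rw [LinearMap.smul_apply, hφ₀, sum_smul_B_apply, smul_eq_mul]
      · -- wa = (1,0) and w1 = (0,1): shape B degeneration
        have hwa10 : wa = (1, 0) := Prod.ext hwa1 hwa2
        have hw10 : w1 = (0, 1) := by
          have : w1.1 = 0 := by omega
          exact Prod.ext this hw12
        apply hshapeB0
        refine ⟨fun y => pEval k V B G1 0 y, fun x => ∑ j, (pEval k V B (Ah j) x 0) • B j, ?_⟩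
        intro x y
        apply dual_ext B
        intro i
        have h1 : E0 x y (bV B i) = pEval k V B (polyL B E0 i) x y := (polyL_eval B E0 i x y).symm
        rw [h1, hcancel i, pEval_mul]
        rw [LinearMap.smul_apply, sum_smul_B_apply, smul_eq_mul]
        congr 1
        · exact pEval_yonly B (hw10 ▸ hw1') x 0 y
        · exact pEval_xonly B (hwa10 ▸ hAhWH i) x y 0
end Aux13

namespace Aux13

open TensorProduct LinearMap Module MvPolynomial

variable {k V : Type} [Field k] [AddCommGroup V] [Module k V]

/-- positivity of both bidegree components of `G0` -/
lemma casePos [Module.Finite k V] [Infinite k] (B : Basis (Fin 3) k (Module.Dual k V))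
    (E0 E E' : V →ₗ[k] V →ₗ[k] Module.Dual k V)
    (hdiagE0 : ∀ φ₀ : Module.Dual k V, (∀ x, ∃ c : k, E0 x x = c • φ₀) → False)
    (hdiagE : ∀ φ₀ : Module.Dual k V, (∀ x, ∃ c : k, E x x = c • φ₀) → False)
    (hdiagE' : ∀ φ₀ : Module.Dual k V, (∀ y, ∃ c : k, E' y y = c • φ₀) → False)
    (G0 G1 G2 : PolyVV k) (hG1 : G1 ≠ 0) (hG2 : G2 ≠ 0)
    {w1 w2 : ℕ × ℕ}
    (hw1 : G1.IsWeightedHomogeneous bideg w1)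
    (hw2 : G2.IsWeightedHomogeneous bideg w2)
    (hrel : ∀ i, G0 * polyL B E0 i = G1 * polyA B E i + G2 * polyB B E' i)
    (hG0 : G0 ≠ 0) {m n : ℕ} (h0 : G0.IsWeightedHomogeneous bideg (m, n)) :
    0 < m ∧ 0 < n := by
  classical
  have hLzero : (∀ i, polyL B E0 i = 0) → False := by
    intro h
    apply hdiagE0 0
    intro x
    refine ⟨0, ?_⟩
    rw [zero_smul]
    apply dual_ext B
    intro i
    have := polyL_eval B E0 i x x
    rw [h i] at this
    simp [pEval] at this
    rw [← this]
    rfl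
  have hAzero : (∀ i, polyA B E i = 0) → False := by
    intro h
    apply hdiagE 0
    intro x
    refine ⟨0, ?_⟩
    rw [zero_smul]
    apply dual_ext B
    intro i
    have := polyA_eval B E i x x
    rw [h i] at this
    simp [pEval] at this
    rw [← this]
    rfl
  have hBzero : (∀ i, polyB B E' i = 0) → False := by
    intro h
    apply hdiagE' 0
    intro y
    refine ⟨0, ?_⟩
    rw [zero_smul]
    apply dual_ext B
    intro i
    have := polyB_eval B E' i y y
    rw [h i] at this
    simp [pEval] at this
    rw [← this]
    rfl
  -- weighted homogeneity of the three products
  have hP0L : ∀ i, (G0 * polyL B E0 i).IsWeightedHomogeneous bideg (m + 1, n + 1) := by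
    intro i
    have := h0.mul (polyL_WH B E0 i)
    simpa using this
  have hP1A : ∀ i, (G1 * polyA B E i).IsWeightedHomogeneous bideg (w1.1 + 2, w1.2) := by
    intro i
    have := hw1.mul (polyA_WH B E i)
    rwa [show w1 + (2, 0) = (w1.1 + 2, w1.2) from Prod.ext (by simp) (by simp)] at this
  have hP2B : ∀ i, (G2 * polyB B E' i).IsWeightedHomogeneous bideg (w2.1, w2.2 + 2) := by
    intro i
    have := hw2.mul (polyB_WH B E' i)
    rwa [show w2 + (0, 2) = (w2.1, w2.2 + 2) from Prod.ext (by simp) (by simp)] at this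
  -- the contradiction engine when one of m, n vanishes
  have main : m = 0 ∨ n = 0 → False := by
    intro hmn
    -- choose the comparison weight
    set wSel : ℕ × ℕ := if m = 0 then (w1.1 + 2, w1.2) else (w2.1, w2.2 + 2) with hwSel
    have hSel_ne : wSel ≠ (m + 1, n + 1) := by
      rcases hmn with h | h
      · rw [hwSel, if_pos h]
        intro hEq
        rw [Prod.mk.injEq] at hEq
        omega
      · by_cases hm : m = 0
        · rw [hwSel, if_pos hm]
          intro hEq
          rw [Prod.mk.injEq] at hEq
          omega
        · rw [hwSel, if_neg hm]
          intro hEq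
          rw [Prod.mk.injEq] at hEq
          omega
    -- extract the wSel-component of the relation
    have hcomp : ∀ i,
        weightedHomogeneousComponent bideg wSel (G1 * polyA B E i) +
        weightedHomogeneousComponent bideg wSel (G2 * polyB B E' i) = 0 := by
      intro i
      have h1 := congrArg (weightedHomogeneousComponent bideg wSel) (hrel i)
      rw [(hP0L i).weightedHomogeneousComponent_ne wSel hSel_ne, map_add] at h1
      exact h1.symm
    by_cases hww : (w1.1 + 2, w1.2) = ((w2.1, w2.2 + 2) : ℕ × ℕ)
    · -- both middle weights coincide; then the LHS component at (m+1,n+1) vanishes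
      have hother : ((m + 1, n + 1) : ℕ × ℕ) ≠ (w1.1 + 2, w1.2) := by
        rcases hmn with h | h
        · intro hEq
          rw [Prod.mk.injEq] at hEq
          omega
        · intro hEq
          have h2 := hEq.trans hww
          rw [Prod.mk.injEq] at h2
          omega
      apply hLzero
      intro i
      have h1 := congrArg (weightedHomogeneousComponent bideg (m + 1, n + 1)) (hrel i)
      rw [(hP0L i).weightedHomogeneousComponent_same, map_add,
        (hP1A i).weightedHomogeneousComponent_ne _ hother,
        (hP2B i).weightedHomogeneousComponent_ne _ (fun hEq => hother (hEq.trans hww.symm)),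
        add_zero] at h1
      exact (mul_eq_zero.mp h1).resolve_left hG0
    · -- the two middle weights differ
      rcases hmn with h | h
      · -- m = 0 : compare at (w1.1+2, w1.2)
        apply hAzero
        intro i
        have h1 := hcomp i
        rw [hwSel, if_pos h] at h1
        rw [(hP1A i).weightedHomogeneousComponent_same,
          (hP2B i).weightedHomogeneousComponent_ne _ (fun hEq => hww hEq),
          add_zero] at h1
        exact (mul_eq_zero.mp h1).resolve_left hG1
      · by_cases hm : m = 0
        · -- still use the m = 0 route
          apply hAzero
          intro i
          have h1 := hcomp i
          rw [hwSel, if_pos hm] at h1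
          rw [(hP1A i).weightedHomogeneousComponent_same,
            (hP2B i).weightedHomogeneousComponent_ne _ (fun hEq => hww hEq),
            add_zero] at h1
          exact (mul_eq_zero.mp h1).resolve_left hG1
        · -- n = 0 : compare at (w2.1, w2.2+2)
          apply hBzero
          intro i
          have h1 := hcomp i
          rw [hwSel, if_neg hm] at h1
          rw [(hP2B i).weightedHomogeneousComponent_same,
            (hP1A i).weightedHomogeneousComponent_ne _ (fun hEq => hww hEq.symm),
            zero_add] at h1
          exact (mul_eq_zero.mp h1).resolve_left hG2
  constructor
  · by_contra h
    exact main (Or.inl (by omega))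
  · by_contra h
    exact main (Or.inr (by omega))

end Aux13

namespace Aux13

variable {k V : Type} [Field k] [AddCommGroup V] [Module k V]

lemma pEval_add (B : Module.Basis (Fin 3) k (Module.Dual k V)) (p p' : PolyVV k) (x y : V) :
    pEval k V B (p + p') x y = pEval k V B p x y + pEval k V B p' x y := by
  simp [pEval]

end Aux13

theorem stmt13 [IsAlgClosed k] (hchar : ringChar k ≠ 2)
    (hdim : Module.finrank k V = 3) (ζ : V ≃ₗ[k] V) (q : k)
    (R : V ⊗[k] V →ₗ[k] V ⊗[k] V) (hR : IsHeckeSymmetry k V q R)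
    (hY : LinearMap.range (skewY k V q R) = Ups2 k V ζ)
    (ω : AlternatingMap k V k (Fin 3)) (hω : ω ≠ 0)
    (Ω : V ⊗[k] (V ⊗[k] V) →ₗ[k] k)
    (hΩ : ∀ x y z : V, Ω (wedge3 k V ζ x y z) = ω ![x, y, z])
    (hU : 1 < Module.finrank k
      (Submodule.span k {f : Module.Dual k V | ∃ x : V, f = ellF k V ζ q R Ω x x}))
    (B : Module.Basis (Fin 3) k (Module.Dual k V))
    (P0 P1 P2 Q0 Q1 Q2 : PolyVV k)
    (hbih : ∀ pp ∈ ({P0, P1, P2, Q0, Q1, Q2} : Set (PolyVV k)),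
      ∃ mn : ℕ × ℕ, pp.IsWeightedHomogeneous bideg mn)
    (hPgcd : ∀ g : PolyVV k, g ∣ P0 → g ∣ P1 → g ∣ P2 → IsUnit g)
    (hQgcd : ∀ g : PolyVV k, g ∣ Q0 → g ∣ Q1 → g ∣ Q2 → IsUnit g)
    (hPrel : ∀ x y : V, pEval k V B P0 x y • ellF k V ζ q R Ω x y =
      pEval k V B P1 x y • ellF k V ζ q R Ω x x +
        pEval k V B P2 x y • ellF' k V ζ q R Ω y y)
    (hQrel : ∀ x y : V, pEval k V B Q0 x y • ellF' k V ζ q R Ω x y =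
      pEval k V B Q1 x y • ellF k V ζ q R Ω x x +
        pEval k V B Q2 x y • ellF' k V ζ q R Ω y y) :
    P0 ≠ 0 ∧ P1 ≠ 0 ∧ P2 ≠ 0 ∧ Q0 ≠ 0 ∧ Q1 ≠ 0 ∧ Q2 ≠ 0 ∧
    (∀ m n : ℕ, P0.IsWeightedHomogeneous bideg (m, n) → 0 < m ∧ 0 < n) ∧
    (∀ m n : ℕ, Q0.IsWeightedHomogeneous bideg (m, n) → 0 < m ∧ 0 < n) ∧
    1 < P0.totalDegree ∧ 1 < Q0.totalDegree := by
  classical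
  haveI hfinV : Module.Finite k V := Module.finite_of_finrank_pos (by rw [hdim]; norm_num)
  set E : V →ₗ[k] V →ₗ[k] Module.Dual k V := Aux13.ellBil ζ (skewY k V q R) Ω with hEdef
  set E' : V →ₗ[k] V →ₗ[k] Module.Dual k V :=
    Aux13.ellBil ζ (skewY k V q (Rprime k V ζ R)) Ω with hE'def
  have hEF : ∀ x y : V, E x y = ellF k V ζ q R Ω x y := fun x y => rfl
  have hEF' : ∀ x y : V, E' x y = ellF' k V ζ q R Ω x y := fun x y => rfl
  -- 2 ≠ 0 in k
  have h2 : (2 : k) ≠ 0 := by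
    intro h
    have hdvd : ringChar k ∣ 2 := (ringChar.spec k 2).mp (by exact_mod_cast h)
    rcases (Nat.dvd_prime Nat.prime_two).mp hdvd with h1 | h1
    · have : ((1 : ℕ) : k) = 0 := (ringChar.spec k 1).mpr (h1 ▸ dvd_refl _)
      simp at this
    · exact hchar h1
  -- the antisymmetry identities
  have hKE : ∀ x y z : V, E x y z - E x z y = (q + 1) * ω ![x, y, z] :=
    fun x y z => Aux13.ellK hΩ (Aux13.eig_wedge2 hR hY) x y z
  have hKE' : ∀ x y z : V, E' x y z - E' x z y = (q + 1) * ω ![x, y, z] :=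
    fun x y z => Aux13.ellK hΩ (Aux13.eig'_wedge2 hR hY) x y z
  -- the twist
  obtain ⟨δ, hδ0, hδ⟩ := Aux13.twist hdim hY hω hΩ (q := q) (R := R)
  have hδE : ∀ x y z : V, E' x y z = δ * E (ζ x) (ζ y) (ζ z) := hδ
  -- no fixed line contains the diagonal of E
  have hdiagE : ∀ φ₀ : Module.Dual k V, (∀ x, ∃ c : k, E x x = c • φ₀) → False := by
    intro φ₀ h
    have hle : Module.finrank k (Submodule.span k
        {f : Module.Dual k V | ∃ x : V, f = ellF k V ζ q R Ω x x}) ≤ 1 := by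
      apply Aux13.finrank_span_le_one (φ₀ := φ₀)
      rintro f ⟨x, rfl⟩
      exact h x
    omega
  -- hence also not for E'
  have hdiagE' : ∀ φ₀ : Module.Dual k V, (∀ y, ∃ c : k, E' y y = c • φ₀) → False := by
    intro φ₀ h
    apply hdiagE (φ₀.comp ζ.symm.toLinearMap)
    intro x
    obtain ⟨c, hc⟩ := h (ζ.symm x)
    refine ⟨c / δ, ?_⟩
    ext w
    have h1 : E' (ζ.symm x) (ζ.symm x) (ζ.symm w) = δ * E x x w := by
      rw [hδE]
      simp
    have h2' : E' (ζ.symm x) (ζ.symm x) (ζ.symm w) = c * φ₀ (ζ.symm w) := by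
      rw [hc]
      simp
    rw [h1] at h2'
    simp only [LinearMap.smul_apply, LinearMap.coe_comp, Function.comp_apply,
      smul_eq_mul, LinearEquiv.coe_coe]
    field_simp
    linear_combination h2'
  -- degeneration exclusions
  have hshapeB_E : (∃ (π : V → k) (α : V → Module.Dual k V), ∀ x y, E x y = π y • α x) →
      False := by
    rintro ⟨π, α, hstruct⟩
    obtain ⟨φ₀, hφ₀⟩ := Aux13.shapeB h2 (fun x y => E x y) hKE π α hstruct
    exact hdiagE φ₀ hφ₀
  have hshapeB_E' : (∃ (π : V → k) (α : V → Module.Dual k V), ∀ x y, E' x y = π y • α x) →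
      False := by
    rintro ⟨π, α, hstruct⟩
    obtain ⟨φ₀, hφ₀⟩ := Aux13.shapeB h2 (fun x y => E' x y) hKE' π α hstruct
    exact hdiagE' φ₀ hφ₀
  have hshapeC_E : (∃ (ρ : V → k) (β : V → Module.Dual k V), ∀ x y, E x y = ρ x • β y) →
      False := by
    rintro ⟨ρ, β, hstruct⟩
    exact Aux13.shapeC hω hΩ (Aux13.wedge2_mem_range hY) ρ β hstruct
  have hshapeC_E' : (∃ (ρ : V → k) (β : V → Module.Dual k V), ∀ x y, E' x y = ρ x • β y) →
      False := by
    rintro ⟨ρ, β, hstruct⟩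
    exact Aux13.shapeC hω hΩ (Aux13.range'_wedge2 hY) ρ β hstruct
  -- transfer the relations to polynomial identities
  have hPrelP : ∀ i, P0 * Aux13.polyL B E i =
      P1 * Aux13.polyA B E i + P2 * Aux13.polyB B E' i := by
    intro i
    apply Aux13.pfunext B
    intro x y
    rw [Aux13.pEval_mul, Aux13.pEval_add, Aux13.pEval_mul, Aux13.pEval_mul,
      Aux13.polyL_eval, Aux13.polyA_eval, Aux13.polyB_eval]
    have h := congrArg (fun φ : Module.Dual k V => φ (Aux13.bV B i)) (hPrel x y)
    exact h
  have hQrelP : ∀ i, Q0 * Aux13.polyL B E' i =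
      Q1 * Aux13.polyA B E i + Q2 * Aux13.polyB B E' i := by
    intro i
    apply Aux13.pfunext B
    intro x y
    rw [Aux13.pEval_mul, Aux13.pEval_add, Aux13.pEval_mul, Aux13.pEval_mul,
      Aux13.polyL_eval, Aux13.polyA_eval, Aux13.polyB_eval]
    have h := congrArg (fun φ : Module.Dual k V => φ (Aux13.bV B i)) (hQrel x y)
    exact h
  -- weighted homogeneity data
  have hbP0 : ∃ mn, P0.IsWeightedHomogeneous bideg mn := hbih P0 (by simp)
  have hbP1 : ∃ mn, P1.IsWeightedHomogeneous bideg mn := hbih P1 (by simp)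
  have hbP2 : ∃ mn, P2.IsWeightedHomogeneous bideg mn := hbih P2 (by simp)
  have hbQ0 : ∃ mn, Q0.IsWeightedHomogeneous bideg mn := hbih Q0 (by simp)
  have hbQ1 : ∃ mn, Q1.IsWeightedHomogeneous bideg mn := hbih Q1 (by simp)
  have hbQ2 : ∃ mn, Q2.IsWeightedHomogeneous bideg mn := hbih Q2 (by simp)
  -- the six nonvanishing statements
  have hP0ne : P0 ≠ 0 := by
    intro h
    apply Aux13.caseZero B E E' hdiagE hdiagE' P1 P2 hbP1 hbP2
      (fun d h1 h2' => hPgcd d (h ▸ dvd_zero d) h1 h2')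
    intro i
    have h1 := hPrelP i
    rw [h, zero_mul] at h1
    linear_combination -h1
  have hQ0ne : Q0 ≠ 0 := by
    intro h
    apply Aux13.caseZero B E E' hdiagE hdiagE' Q1 Q2 hbQ1 hbQ2
      (fun d h1 h2' => hQgcd d (h ▸ dvd_zero d) h1 h2')
    intro i
    have h1 := hQrelP i
    rw [h, zero_mul] at h1
    linear_combination -h1
  have hP1ne : P1 ≠ 0 := by
    intro h
    apply Aux13.caseR B E E' hdiagE hdiagE' hshapeC_E P0 P2 hbP0 hbP2
      (fun d h0 h2' => hPgcd d h0 (h ▸ dvd_zero d) h2')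
    intro i
    have h1 := hPrelP i
    rw [h, zero_mul, zero_add] at h1
    exact h1
  have hP2ne : P2 ≠ 0 := by
    intro h
    apply Aux13.caseL B E E hdiagE hdiagE hshapeB_E P0 P1 hbP0 hbP1
      (fun d h0 h1' => hPgcd d h0 h1' (h ▸ dvd_zero d))
    intro i
    have h1 := hPrelP i
    rw [h, zero_mul, add_zero] at h1
    exact h1
  have hQ1ne : Q1 ≠ 0 := by
    intro h
    apply Aux13.caseR B E' E' hdiagE' hdiagE' hshapeC_E' Q0 Q2 hbQ0 hbQ2
      (fun d h0 h2' => hQgcd d h0 (h ▸ dvd_zero d) h2')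
    intro i
    have h1 := hQrelP i
    rw [h, zero_mul, zero_add] at h1
    exact h1
  have hQ2ne : Q2 ≠ 0 := by
    intro h
    apply Aux13.caseL B E' E hdiagE' hdiagE hshapeB_E' Q0 Q1 hbQ0 hbQ1
      (fun d h0 h1' => hQgcd d h0 h1' (h ▸ dvd_zero d))
    intro i
    have h1 := hQrelP i
    rw [h, zero_mul, add_zero] at h1
    exact h1
  -- bidegree positivity
  obtain ⟨w1, hw1⟩ := hbP1
  obtain ⟨w2, hw2⟩ := hbP2
  obtain ⟨v1, hv1⟩ := hbQ1
  obtain ⟨v2, hv2⟩ := hbQ2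
  have hPpos : ∀ m n : ℕ, P0.IsWeightedHomogeneous bideg (m, n) → 0 < m ∧ 0 < n := by
    intro m n h0
    exact Aux13.casePos B E E E' hdiagE hdiagE hdiagE' P0 P1 P2 hP1ne hP2ne hw1 hw2
      hPrelP hP0ne h0
  have hQpos : ∀ m n : ℕ, Q0.IsWeightedHomogeneous bideg (m, n) → 0 < m ∧ 0 < n := by
    intro m n h0
    exact Aux13.casePos B E' E E' hdiagE' hdiagE hdiagE' Q0 Q1 Q2 hQ1ne hQ2ne hv1 hv2
      hQrelP hQ0ne h0
  -- total degrees
  obtain ⟨⟨m0, n0⟩, hw0⟩ := hbih P0 (by simp)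
  obtain ⟨⟨m0', n0'⟩, hw0'⟩ := hbih Q0 (by simp)
  have htdP : 1 < P0.totalDegree := by
    rw [Aux13.totalDegree_of_WH hP0ne hw0]
    have := hPpos m0 n0 hw0
    omega
  have htdQ : 1 < Q0.totalDegree := by
    rw [Aux13.totalDegree_of_WH hQ0ne hw0']
    have := hQpos m0' n0' hw0'
    omega
  exact ⟨hP0ne, hP1ne, hP2ne, hQ0ne, hQ1ne, hQ2ne, hPpos, hQpos, htdP, htdQ⟩
end
end

section
/- Let k be an algebraically closed field, V a 3-dimensional k-vector space, and ζ ∈ GL(V). Let C(ζ) = {φ ∈ GL(V) : φζ = ζφ} be the centralizer of ζ in GL(V) and G(ζ) = {φ ∈ GL(V) : φζφ⁻¹ = c·ζ for some c ∈ k, c ≠ 0} (a subgroup of GL(V) containing C(ζ)). Then either G(ζ) = C(ζ), or C(ζ) is a subgroup of index 3 in G(ζ). In the latter case char k ≠ 3 and ζ has three distinct eigenvalues α₁, α₂, α₃ satisfying α₁α₂⁻¹ = α₂α₃⁻¹ = α₃α₁⁻¹ = ε, where ε is a primitive cube root of unity in k. -/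
/-!
Sending `φ ∈ G(ζ)` to the scalar `c` with `φ ζ = c • ζ φ` is a homomorphism `G(ζ) → kˣ` with kernel
`C(ζ)`, so the index of `C(ζ)` in `G(ζ)` is the order of its image. Taking determinants gives
`c ^ dim V = 1`; as `dim V = 3` is prime, the image is either trivial or the whole group of cube roots
of unity, of order `3`. In the second case a `φ` with scalar `c ≠ 1` carries an eigenvector of `ζ` with
eigenvalue `μ` to one with eigenvalue `c⁻¹ μ`, so any eigenvalue `α` produces the eigenvalues
`α, εα, ε²α` with `ε = c⁻¹` a primitive cube root of unity.
-/

open Module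

lemma IsPrimitiveRoot.ringChar_ne {R : Type*} [CommRing R] [IsDomain R] {ζ : R} {n : ℕ} [NeZero n]
    (hζ : IsPrimitiveRoot ζ n) : ringChar R ≠ n :=
  fun h => hζ.neZero'.out (h ▸ ringChar.Nat.cast_ringChar)

namespace LinearEquiv

variable {k V : Type*} [Field k] [AddCommGroup V] [Module k V] {ζ φ ψ : V ≃ₗ[k] V} {c d : k}

lemma apply_mul_comp_eq_smul (hφ : ∀ v, φ (ζ v) = c • ζ (φ v)) (hψ : ∀ v, ψ (ζ v) = d • ζ (ψ v))
    (v : V) : (φ * ψ) (ζ v) = (c * d) • ζ ((φ * ψ) v) := by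
  simp only [mul_apply, hψ, map_smul, hφ, smul_smul, mul_comm]

lemma apply_inv_comp_eq_smul (hc : c ≠ 0) (hφ : ∀ v, φ (ζ v) = c • ζ (φ v)) (v : V) :
    φ⁻¹ (ζ v) = c⁻¹ • ζ (φ⁻¹ v) := by
  apply φ.injective
  rw [map_smul, hφ, inv_smul_smul₀ hc]
  simp

lemma pow_finrank_eq_one_of_apply_comp_eq_smul (h : ∀ v, φ (ζ v) = c • ζ (φ v)) :
    c ^ finrank k V = 1 := by
  have hcomp : φ.toLinearMap ∘ₗ ζ.toLinearMap = (c • ζ.toLinearMap) ∘ₗ φ.toLinearMap := by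
    ext v; simpa using h v
  have hdet := congrArg LinearMap.det hcomp
  rw [LinearMap.det_comp, LinearMap.det_comp, LinearMap.det_smul] at hdet
  have hunit : LinearMap.det ζ.toLinearMap * LinearMap.det φ.toLinearMap ≠ 0 :=
    mul_ne_zero (isUnit_det' ζ).ne_zero (isUnit_det' φ).ne_zero
  exact mul_right_cancel₀ hunit (by linear_combination -hdet)

lemma eq_of_apply_comp_eq_smul [Nontrivial V] (h : ∀ v, φ (ζ v) = c • ζ (φ v))
    (h' : ∀ v, φ (ζ v) = d • ζ (φ v)) : c = d := by
  obtain ⟨v, hv⟩ := exists_ne (0 : V)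
  have hw : ζ (φ v) ≠ 0 := by simpa using hv
  exact smul_left_injective k hw ((h v).symm.trans (h' v))

lemma ne_zero_of_hasEigenvalue {α : k} (hα : End.HasEigenvalue (ζ.toLinearMap : End k V) α) :
    α ≠ 0 := by
  rintro rfl
  obtain ⟨v, hv⟩ := hα.exists_hasEigenvector
  have hζv : ζ v = 0 := by simpa using End.mem_eigenspace_iff.mp hv.1
  exact hv.2 (by simpa using hζv)

lemma hasEigenvalue_inv_mul_of_apply_comp_eq_smul (h : ∀ v, φ (ζ v) = c • ζ (φ v)) (hc : c ≠ 0)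
    {μ : k} (hμ : End.HasEigenvalue (ζ.toLinearMap : End k V) μ) :
    End.HasEigenvalue (ζ.toLinearMap : End k V) (c⁻¹ * μ) := by
  obtain ⟨v, hv⟩ := hμ.exists_hasEigenvector
  refine End.hasEigenvalue_of_hasEigenvector (x := φ v) ⟨End.mem_eigenspace_iff.mpr ?_, ?_⟩
  · have hφv := h v
    rw [show ζ v = μ • v from End.mem_eigenspace_iff.mp hv.1, map_smul] at hφv
    rw [coe_coe, mul_smul, hφv, inv_smul_smul₀ hc]
  · simpa using hv.2

lemma exists_eigenvalues_of_isPrimitiveRoot_three {ε α : k} (hε : IsPrimitiveRoot ε 3)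
    (hα : End.HasEigenvalue (ζ.toLinearMap : End k V) α)
    (hshift : ∀ μ, End.HasEigenvalue (ζ.toLinearMap : End k V) μ →
      End.HasEigenvalue (ζ.toLinearMap : End k V) (ε * μ)) :
    ∃ α₁ α₂ α₃ : k, α₁ ≠ α₂ ∧ α₂ ≠ α₃ ∧ α₁ ≠ α₃ ∧
      End.HasEigenvalue (ζ.toLinearMap : End k V) α₁ ∧
      End.HasEigenvalue (ζ.toLinearMap : End k V) α₂ ∧
      End.HasEigenvalue (ζ.toLinearMap : End k V) α₃ ∧
      ∃ ε : k, IsPrimitiveRoot ε 3 ∧ α₁ * α₂⁻¹ = ε ∧ α₂ * α₃⁻¹ = ε ∧ α₃ * α₁⁻¹ = ε := by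
  have hα0 := ne_zero_of_hasEigenvalue hα
  have hε0 := hε.ne_zero (by norm_num)
  have hε1 : ε ≠ 1 := hε.ne_one (by norm_num)
  have hε2 : ε ^ 2 ≠ 1 := hε.pow_ne_one_of_pos_of_lt (by norm_num) (by norm_num)
  have hε3 : ε ^ 3 = 1 := hε.pow_eq_one
  refine ⟨ε * (ε * α), ε * α, α, ?_, ?_, ?_, hshift _ (hshift _ hα), hshift _ hα, hα, ε, hε,
    ?_, ?_, ?_⟩
  · exact fun h => hε1 (mul_right_cancel₀ (mul_ne_zero hε0 hα0) (by simpa using h))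
  · exact fun h => hε1 (mul_right_cancel₀ hα0 (by simpa using h))
  · exact fun h => hε2 (mul_right_cancel₀ hα0 (by linear_combination h))
  · field_simp
  · field_simp
  · rw [mul_inv_eq_iff_eq_mul₀ (mul_ne_zero hε0 (mul_ne_zero hε0 hα0))]
    linear_combination -α * hε3

variable (ζ)

/-- The group `G(ζ)` of automorphisms conjugating `ζ` to a nonzero multiple of itself. -/
def projCentralizer : Subgroup (V ≃ₗ[k] V) where
  carrier := {φ | ∃ c : k, c ≠ 0 ∧ ∀ v, φ (ζ v) = c • ζ (φ v)}
  one_mem' := ⟨1, one_ne_zero, fun v => by simp⟩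
  mul_mem' := by
    rintro φ ψ ⟨c, hc, hφ⟩ ⟨d, hd, hψ⟩
    exact ⟨c * d, mul_ne_zero hc hd, apply_mul_comp_eq_smul hφ hψ⟩
  inv_mem' := by
    rintro φ ⟨c, hc, hφ⟩
    exact ⟨c⁻¹, inv_ne_zero hc, apply_inv_comp_eq_smul hc hφ⟩

variable {ζ}

lemma mem_projCentralizer :
    φ ∈ projCentralizer ζ ↔ ∃ c : k, c ≠ 0 ∧ ∀ v, φ (ζ v) = c • ζ (φ v) :=
  Iff.rfl

lemma mem_centralizer_singleton_iff_apply_comm :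
    φ ∈ Subgroup.centralizer {ζ} ↔ ∀ v, φ (ζ v) = ζ (φ v) := by
  rw [Subgroup.mem_centralizer_singleton_iff, LinearEquiv.ext_iff]
  rfl

lemma centralizer_le_projCentralizer : Subgroup.centralizer {ζ} ≤ projCentralizer ζ :=
  fun φ hφ => ⟨1, one_ne_zero, by simpa using mem_centralizer_singleton_iff_apply_comm.mp hφ⟩

variable [Nontrivial V] (ζ)

/-- The scalar `c` with `φ ζ φ⁻¹ = c • ζ`. -/
noncomputable def projCentralizerScalar : projCentralizer ζ →* kˣ where
  toFun φ := Units.mk0 _ (mem_projCentralizer.mp φ.2).choose_spec.1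
  map_one' := Units.ext <|
    eq_of_apply_comp_eq_smul (mem_projCentralizer.mp (one_mem _)).choose_spec.2 (by simp)
  map_mul' φ ψ := Units.ext <|
    eq_of_apply_comp_eq_smul (mem_projCentralizer.mp (φ * ψ).2).choose_spec.2 <|
      apply_mul_comp_eq_smul (mem_projCentralizer.mp φ.2).choose_spec.2
        (mem_projCentralizer.mp ψ.2).choose_spec.2

variable {ζ}

lemma projCentralizerScalar_spec (φ : projCentralizer ζ) (v : V) :
    (φ : V ≃ₗ[k] V) (ζ v) = (projCentralizerScalar ζ φ : k) • ζ ((φ : V ≃ₗ[k] V) v) :=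
  (mem_projCentralizer.mp φ.2).choose_spec.2 v

lemma projCentralizerScalar_eq_one_iff {φ : projCentralizer ζ} :
    projCentralizerScalar ζ φ = 1 ↔ ∀ v, (φ : V ≃ₗ[k] V) (ζ v) = ζ ((φ : V ≃ₗ[k] V) v) := by
  rw [← Units.val_eq_one]
  refine ⟨fun h v => by simpa [h] using projCentralizerScalar_spec φ v, fun h => ?_⟩
  exact eq_of_apply_comp_eq_smul (projCentralizerScalar_spec φ) (by simpa using h)

lemma ker_projCentralizerScalar :
    (projCentralizerScalar ζ).ker = (Subgroup.centralizer {ζ}).subgroupOf (projCentralizer ζ) := by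
  ext φ
  rw [MonoidHom.mem_ker, Subgroup.mem_subgroupOf, mem_centralizer_singleton_iff_apply_comm,
    projCentralizerScalar_eq_one_iff]

lemma relIndex_centralizer_projCentralizer :
    (Subgroup.centralizer {ζ}).relIndex (projCentralizer ζ) =
      Nat.card (projCentralizerScalar ζ).range := by
  rw [Subgroup.relIndex, ← ker_projCentralizerScalar, Subgroup.index_ker]

lemma projCentralizer_eq_centralizer (h : (projCentralizerScalar ζ).range = ⊥) :
    projCentralizer ζ = Subgroup.centralizer {ζ} := by
  refine le_antisymm ?_ centralizer_le_projCentralizer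
  rw [← Subgroup.subgroupOf_eq_top, ← ker_projCentralizerScalar,
    MonoidHom.range_eq_bot_iff.mp h, MonoidHom.ker_one]

lemma range_projCentralizerScalar_le_rootsOfUnity :
    (projCentralizerScalar ζ).range ≤ rootsOfUnity (finrank k V) k := by
  rintro _ ⟨φ, rfl⟩
  rw [mem_rootsOfUnity']
  exact pow_finrank_eq_one_of_apply_comp_eq_smul (projCentralizerScalar_spec φ)

lemma isPrimitiveRoot_projCentralizerScalar [Fact (finrank k V).Prime] {φ : projCentralizer ζ}
    (hφ : projCentralizerScalar ζ φ ≠ 1) :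
    IsPrimitiveRoot (projCentralizerScalar ζ φ) (finrank k V) :=
  IsPrimitiveRoot.iff_orderOf.mpr <| orderOf_eq_prime
    (range_projCentralizerScalar_le_rootsOfUnity ⟨φ, rfl⟩) hφ

lemma card_range_projCentralizerScalar [Fact (finrank k V).Prime]
    (h : (projCentralizerScalar ζ).range ≠ ⊥) :
    Nat.card (projCentralizerScalar ζ).range = finrank k V := by
  obtain ⟨⟨_, φ, rfl⟩, hφ⟩ := Subgroup.ne_bot_iff_exists_ne_one.mp h
  have hφ' : projCentralizerScalar ζ φ ≠ 1 := fun h1 => hφ (Subtype.ext h1)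
  have hle := range_projCentralizerScalar_le_rootsOfUnity (ζ := ζ)
  have : Finite (projCentralizerScalar ζ).range :=
    Finite.of_injective _ (Subgroup.inclusion_injective hle)
  refine le_antisymm ((Subgroup.card_le_of_le hle).trans (card_rootsOfUnity _ _)) ?_
  calc finrank k V = Nat.card (Subgroup.zpowers (projCentralizerScalar ζ φ)) := by
        rw [Nat.card_zpowers, (isPrimitiveRoot_projCentralizerScalar hφ').eq_orderOf]
    _ ≤ Nat.card (projCentralizerScalar ζ).range :=
        Subgroup.card_le_of_le (Subgroup.zpowers_le.mpr ⟨φ, rfl⟩)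

end LinearEquiv

open LinearEquiv

theorem stmt19 (k V : Type) [Field k] [IsAlgClosed k] [AddCommGroup V] [Module k V]
    (hdim : Module.finrank k V = 3) (ζ : V ≃ₗ[k] V)
    -- `C` is the centralizer of `ζ` in `GL(V)` (the automorphism group of `V`)
    (C : Subgroup (V ≃ₗ[k] V))
    (hC : ∀ φ : V ≃ₗ[k] V, φ ∈ C ↔ ∀ v : V, φ (ζ v) = ζ (φ v))
    -- `G` consists of those `φ` with `φζφ⁻¹ = c·ζ` for some nonzero scalar `c`
    (G : Subgroup (V ≃ₗ[k] V))
    (hG : ∀ φ : V ≃ₗ[k] V, φ ∈ G ↔ ∃ c : k, c ≠ 0 ∧ ∀ v : V, φ (ζ v) = c • ζ (φ v)) :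
    G = C ∨
      (C.relIndex G = 3 ∧ ringChar k ≠ 3 ∧
        ∃ α₁ α₂ α₃ : k, α₁ ≠ α₂ ∧ α₂ ≠ α₃ ∧ α₁ ≠ α₃ ∧
          Module.End.HasEigenvalue (ζ.toLinearMap : Module.End k V) α₁ ∧
          Module.End.HasEigenvalue (ζ.toLinearMap : Module.End k V) α₂ ∧
          Module.End.HasEigenvalue (ζ.toLinearMap : Module.End k V) α₃ ∧
          ∃ ε : k, IsPrimitiveRoot ε 3 ∧
            α₁ * α₂⁻¹ = ε ∧ α₂ * α₃⁻¹ = ε ∧ α₃ * α₁⁻¹ = ε) := by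
  have : Fact (finrank k V).Prime := ⟨hdim ▸ Nat.prime_three⟩
  have hpos : 0 < finrank k V := by rw [hdim]; norm_num
  have : FiniteDimensional k V := .of_finrank_pos hpos
  have : Nontrivial V := Module.nontrivial_of_finrank_pos hpos
  obtain rfl : C = Subgroup.centralizer {ζ} :=
    Subgroup.ext fun φ => (hC φ).trans mem_centralizer_singleton_iff_apply_comm.symm
  obtain rfl : G = projCentralizer ζ := Subgroup.ext hG
  by_cases hrange : (projCentralizerScalar ζ).range = ⊥
  · exact .inl (projCentralizer_eq_centralizer hrange)
  obtain ⟨⟨_, φ, rfl⟩, hφ⟩ := Subgroup.ne_bot_iff_exists_ne_one.mp hrange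
  have hε : IsPrimitiveRoot ((projCentralizerScalar ζ φ : k)⁻¹) 3 :=
    hdim ▸ (IsPrimitiveRoot.coe_units_iff.mpr
      (isPrimitiveRoot_projCentralizerScalar fun h1 => hφ (Subtype.ext h1))).inv
  obtain ⟨α, hα⟩ := End.exists_eigenvalue ζ.toLinearMap
  refine .inr ⟨by rw [relIndex_centralizer_projCentralizer, card_range_projCentralizerScalar hrange,
    hdim], hε.ringChar_ne, exists_eigenvalues_of_isPrimitiveRoot_three hε hα fun μ =>
      hasEigenvalue_inv_mul_of_apply_comp_eq_smul (projCentralizerScalar_spec φ) (Units.ne_zero _)⟩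
end
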